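/- If s_0⋯s_{n−1} = 1, then for every k ∈ ℕ and μ ∈ ℂ the element F_k^μ(s̄) lies in A(s̄); in particular F_k^μ(s̄) satisfies the pole and wheel conditions, has total degree 0, and for all integers a ≤ b with [a;b] ≤ kδ the limits ∂^{(∞;a,b)}F_k^μ(s̄) and ∂^{(0;a,b)}F_k^μ(s̄) exist and satisfy ∂^{(∞;a,b)}F_k^μ(s̄) = (∏_{i=a}^b s_i)·∂^{(0;a,b)}F_k^μ(s̄). -/

import Mathlib

open Filter Topology

noncomputable section

/-- An assignment of complex values to the variables `x i j` (`i`-th group, `j`-th variable,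
both 0-indexed). -/
abbrev Va : Type := ℕ → ℕ → ℂ

/-- cyclic successor mod `n` -/
def cyc (n i : ℕ) : ℕ := (i + 1) % n

/-- cyclic predecessor mod `n` -/
def cycP (n i : ℕ) : ℕ := (i + n - 1) % n

/-- the matrix of rational functions `ω_{i,i'}(z)` -/
def omg (n : ℕ) (q d : ℂ) (i i' : ℕ) (z : ℂ) : ℂ :=
  if i' = i then (z - (q ^ 2)⁻¹) / (z - 1)
  else if i' = cyc n i then (d⁻¹ * z - q) / (z - 1)
  else if i = cyc n i' then (z - q * d⁻¹) / (z - 1)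
  else 1

/-- the assignment `v` with the first `m i` variables of each group `i < n` permuted by `σ i` -/
def permAssign (n : ℕ) (m : ℕ → ℕ) (σ : ∀ i : Fin n, Equiv.Perm (Fin (m i.1))) (v : Va) : Va :=
  fun i j =>
    if h : i < n then
      if h2 : j < m i then v i ((σ ⟨i, h⟩) ⟨j, h2⟩).1 else v i j
    else v i j

/-- the star (shuffle) product of `F` of degree `k` with `G` of degree `l` -/
def starD (n : ℕ) (q d : ℂ) (k l : ℕ → ℕ) (F G : Va → ℂ) : Va → ℂ :=
  fun v =>
    ∑ σ : ∀ i : Fin n, Equiv.Perm (Fin (k i.1 + l i.1)),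
      (fun w : Va =>
          F w * G (fun i j => w i (j + k i)) *
            ∏ i : Fin n, ∏ i' : Fin n, ∏ j : Fin (k i.1), ∏ j' : Fin (l i'.1),
              omg n q d i.1 i'.1 (w i.1 j.1 / w i'.1 (k i'.1 + j'.1)))
        (permAssign n (fun i => k i + l i) σ v)

/-- generic assignments for the degree vector `k`: all relevant coordinates are nonzero and
pairwise distinct (so that all our rational expressions are pole-free) -/
def Dom (n : ℕ) (k : ℕ → ℕ) : Set Va :=
  {v | (∀ i, i < n → ∀ j, j < k i → v i j ≠ 0) ∧
    ∀ i i' j j', i < n → i' < n → j < k i → j' < k i' → (i, j) ≠ (i', j') → v i j ≠ v i' j'}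

/-- generic assignments with no bound on the number of variables in each group -/
def DomAll (n : ℕ) : Set Va :=
  {v | (∀ i, i < n → ∀ j, v i j ≠ 0) ∧
    ∀ i i' j j', i < n → i' < n → (i, j) ≠ (i', j') → v i j ≠ v i' j'}

/-- `F` only depends on the variables `x i j` with `i < n`, `j < k i` -/
def DependsOnK (n : ℕ) (k : ℕ → ℕ) (F : Va → ℂ) : Prop :=
  ∀ v w : Va, (∀ i, i < n → ∀ j, j < k i → v i j = w i j) → F v = F w

/-- `F` is symmetric in the variables of each group -/
def SymmIn (n : ℕ) (k : ℕ → ℕ) (F : Va → ℂ) : Prop :=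
  ∀ v : Va, ∀ i₀, i₀ < n → ∀ σ : Equiv.Perm ℕ, (∀ j, k i₀ ≤ j → σ j = j) →
    F (fun i j => if i = i₀ then v i (σ j) else v i j) = F v

/-- the denominator `∏_{i ∈ [n]} ∏_{j ≤ k_i, j' ≤ k_{i+1}} (x_{i,j} - x_{i+1,j'})` -/
def poleDenom (n : ℕ) (k : ℕ → ℕ) (v : Va) : ℂ :=
  ∏ i : Fin n, ∏ j : Fin (k i.1), ∏ j' : Fin (k (cyc n i.1)), (v i.1 j.1 - v (cyc n i.1) j'.1)

/-- the pole conditions: `F = f / poleDenom` with `f` a (Laurent) polynomial,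
written as `f₀ / (∏ x_{i,j})^N` with `f₀` an honest polynomial -/
def PoleCond (n : ℕ) (k : ℕ → ℕ) (F : Va → ℂ) : Prop :=
  ∃ (f : MvPolynomial (ℕ × ℕ) ℂ) (N : ℕ),
    ∀ v ∈ Dom n k,
      F v * poleDenom n k v * (∏ i : Fin n, ∏ j : Fin (k i.1), v i.1 j.1) ^ N =
        MvPolynomial.eval (fun p : ℕ × ℕ => v p.1 p.2) f

/-- the wheel conditions: `F` vanishes whenever `x_{i,j₁}/x_{i+ε,l} = q d^ε` and
`x_{i+ε,l}/x_{i,j₂} = q d^{-ε}` for some `ε ∈ {±1}` -/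
def WheelCond (n : ℕ) (q d : ℂ) (k : ℕ → ℕ) (F : Va → ℂ) : Prop :=
  ∀ v ∈ Dom n k, ∀ i, i < n →
    ((∀ j₁ j₂ l, j₁ < k i → j₂ < k i → l < k (cyc n i) →
        v i j₁ = q * d * v (cyc n i) l → v (cyc n i) l = q * d⁻¹ * v i j₂ → F v = 0) ∧
     (∀ j₁ j₂ l, j₁ < k i → j₂ < k i → l < k (cycP n i) →
        v i j₁ = q * d⁻¹ * v (cycP n i) l → v (cycP n i) l = q * d * v i j₂ → F v = 0))

/-- `F` has total degree `0` -/
def Deg0 (n : ℕ) (k : ℕ → ℕ) (F : Va → ℂ) : Prop :=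
  ∀ v ∈ Dom n k, ∀ ξ : ℂ, ξ ≠ 0 → F (fun i j => ξ * v i j) = F v

/-- membership in `S_{k̄}`: the big shuffle algebra -/
def SK (n : ℕ) (q d : ℂ) (k : ℕ → ℕ) (F : Va → ℂ) : Prop :=
  DependsOnK n k F ∧ SymmIn n k F ∧ PoleCond n k F ∧ WheelCond n q d k F

/-- membership in `S_{k̄,0}` -/
def SK0 (n : ℕ) (q d : ℂ) (k : ℕ → ℕ) (F : Va → ℂ) : Prop :=
  SK n q d k F ∧ Deg0 n k F

/-- multiply by `ξ` the first `l i` variables of each group `i < n` -/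
def scaleVar (n : ℕ) (l : ℕ → ℕ) (ξ : ℂ) (v : Va) : Va :=
  fun i j => if i < n ∧ j < l i then ξ * v i j else v i j

/-- `∂^{(∞;l̄)} F` exists at `v` and equals `Lim` -/
def limInfty (n : ℕ) (l : ℕ → ℕ) (F : Va → ℂ) (v : Va) (Lim : ℂ) : Prop :=
  Tendsto (fun ξ : ℂ => F (scaleVar n l ξ v)) (Bornology.cobounded ℂ) (𝓝 Lim)

/-- `∂^{(0;l̄)} F` exists at `v` and equals `Lim` -/
def limZero (n : ℕ) (l : ℕ → ℕ) (F : Va → ℂ) (v : Va) (Lim : ℂ) : Prop :=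
  Tendsto (fun ξ : ℂ => F (scaleVar n l ξ v)) (𝓝[≠] (0 : ℂ)) (𝓝 Lim)

/-- the degree vector `[a;b]`: `[a;b]_i = #{c ∈ [a,b] : c ≡ i mod n}` -/
def intvCount (n : ℕ) (a b : ℤ) (i : ℕ) : ℕ :=
  ((Finset.Icc a b).filter fun c => c % (n : ℤ) = (i : ℤ)).card

/-- `s` extended `n`-periodically to integer indices -/
def sext (n : ℕ) (s : ℕ → ℂ) (c : ℤ) : ℂ := s (c % (n : ℤ)).toNat

/-- membership in `A(s̄)_{k̄}` -/
def memA (n : ℕ) (q d : ℂ) (s : ℕ → ℂ) (k : ℕ → ℕ) (F : Va → ℂ) : Prop :=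
  SK0 n q d k F ∧
    ∀ a b : ℤ, a ≤ b → (∀ i, i < n → intvCount n a b i ≤ k i) →
      ∀ v ∈ Dom n k, ∃ Li L0 : ℂ,
        limInfty n (intvCount n a b) F v Li ∧ limZero n (intvCount n a b) F v L0 ∧
          Li = (∏ c ∈ Finset.Icc a b, sext n s c) * L0

/-- genericity of the tuple `(s_0, …, s_{n-1})` -/
def Generic (n : ℕ) (q d : ℂ) (s : ℕ → ℂ) : Prop :=
  ∀ α : ℕ → ℤ, (∃ a b : ℤ, (∏ i ∈ Finset.range n, s i ^ α i) = q ^ a * d ^ b) →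
    ∀ i j, i < n → j < n → α i = α j

/-- none of `q`, `qd`, `qd⁻¹` is a root of unity -/
def NoRootsOfUnity (q d : ℂ) : Prop :=
  ∀ m : ℕ, 0 < m → q ^ m ≠ 1 ∧ (q * d) ^ m ≠ 1 ∧ (q * d⁻¹) ^ m ≠ 1

/-- the element `F_k^μ(s̄) ∈ S_{kδ,0}` -/
def Fkmu (n : ℕ) (q : ℂ) (s : ℕ → ℂ) (k : ℕ) (μ : ℂ) : Va → ℂ :=
  fun v =>
    ((∏ i : Fin n, ∏ j : Fin k, ∏ j' : Fin k,
        if j = j' then 1 else v i.1 j.1 - (q ^ 2)⁻¹ * v i.1 j'.1) *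
      ∏ i : Fin n, ((∏ i' ∈ Finset.range (i.1 + 1), s i') * ∏ j : Fin k, v i.1 j.1 -
        μ * ∏ j : Fin k, v (cyc n i.1) j.1)) /
      ∏ i : Fin n, ∏ j : Fin k, ∏ j' : Fin k, (v i.1 j.1 - v (cyc n i.1) j'.1)

/-- iterated star product `F_{k_1}^{μ_1}(s̄) ⋆ ⋯ ⋆ F_{k_r}^{μ_r}(s̄)`, together with its
total degree `k_1 + ⋯ + k_r` -/
def FkmuList (n : ℕ) (q d : ℂ) (s : ℕ → ℂ) : List (ℕ × ℂ) → ℕ × (Va → ℂ)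
  | [] => (0, fun _ => 1)
  | km :: rest =>
      let p := FkmuList n q d s rest
      (km.1 + p.1, starD n q d (fun _ => km.1) (fun _ => p.1) (Fkmu n q s km.1 km.2) p.2)

/-- the element `F_k ∈ S_{kδ,0}` -/
def Fk (n : ℕ) (q : ℂ) (k : ℕ) : Va → ℂ :=
  fun v =>
    ((∏ i : Fin n, ∏ j : Fin k, ∏ j' : Fin k,
        if j = j' then 1 else q⁻¹ * v i.1 j.1 - q * v i.1 j'.1) *
      ∏ i : Fin n, ∏ j : Fin k, v i.1 j.1) /
      ∏ i : Fin n, ∏ j : Fin k, ∏ j' : Fin k, (v (cyc n i.1) j'.1 - v i.1 j.1)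

/-- iterated star product `L_{m_1} ⋆ ⋯ ⋆ L_{m_r}` of elements `L m` of degree `mδ`,
together with its total degree -/
def starList (n : ℕ) (q d : ℂ) (L : ℕ → Va → ℂ) : List ℕ → ℕ × (Va → ℂ)
  | [] => (0, fun _ => 1)
  | m :: rest =>
      let p := starList n q d L rest
      (m + p.1, starD n q d (fun _ => m) (fun _ => p.1) (L m) p.2)




/-! ### Auxiliary development for stmt1 -/

section AuxBasic

open Finset

lemma cyc_lt (n i : ℕ) (hn : 0 < n) : cyc n i < n := Nat.mod_lt _ hn

lemma cycP_lt (n i : ℕ) (hn : 0 < n) : cycP n i < n := Nat.mod_lt _ hn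

lemma cycP_cyc (n i : ℕ) (hn : 0 < n) (hi : i < n) : cycP n (cyc n i) = i := by
  unfold cyc cycP
  have h0 : (i + 1) % n + n - 1 = (i + 1) % n + (n - 1) := by omega
  rw [h0, Nat.mod_add_mod]
  have h1 : i + 1 + (n - 1) = i + n := by omega
  rw [h1, Nat.add_mod_right, Nat.mod_eq_of_lt hi]

lemma cyc_cycP (n i : ℕ) (hn : 0 < n) (hi : i < n) : cyc n (cycP n i) = i := by
  unfold cyc cycP
  rw [Nat.mod_add_mod]
  have h1 : i + n - 1 + 1 = i + n := by omega
  rw [h1, Nat.add_mod_right, Nat.mod_eq_of_lt hi]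

lemma cyc_ne (n i : ℕ) (hn : 2 ≤ n) (hi : i < n) : cyc n i ≠ i := by
  unfold cyc
  rcases Nat.lt_or_ge (i+1) n with h | h
  · rw [Nat.mod_eq_of_lt h]; omega
  · have : i + 1 = n := by omega
    rw [this, Nat.mod_self]; omega

/-- reindexing a product over `range n` by the cyclic shift -/
lemma prod_cyc {M : Type*} [CommMonoid M] (n : ℕ) (g : ℕ → M) :
    ∏ i ∈ range n, g (cyc n i) = ∏ i ∈ range n, g i := by
  rcases Nat.eq_zero_or_pos n with rfl | hn
  · simp
  refine Finset.prod_nbij' (fun i => cyc n i) (fun i => cycP n i) ?_ ?_ ?_ ?_ ?_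
  · intro a ha; exact mem_range.2 (cyc_lt n a hn)
  · intro a ha; exact mem_range.2 (cycP_lt n a hn)
  · intro a ha; exact cycP_cyc n a hn (mem_range.1 ha)
  · intro a ha; exact cyc_cycP n a hn (mem_range.1 ha)
  · intro a ha; rfl

lemma sum_cyc {M : Type*} [AddCommMonoid M] (n : ℕ) (g : ℕ → M) :
    ∑ i ∈ range n, g (cyc n i) = ∑ i ∈ range n, g i := by
  rcases Nat.eq_zero_or_pos n with rfl | hn
  · simp
  refine Finset.sum_nbij' (fun i => cyc n i) (fun i => cycP n i) ?_ ?_ ?_ ?_ ?_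
  · intro a ha; exact mem_range.2 (cyc_lt n a hn)
  · intro a ha; exact mem_range.2 (cycP_lt n a hn)
  · intro a ha; exact cycP_cyc n a hn (mem_range.1 ha)
  · intro a ha; exact cyc_cycP n a hn (mem_range.1 ha)
  · intro a ha; rfl

/-- splitting a product over `range k` at `m` -/
lemma prod_split {M : Type*} [CommMonoid M] (k m : ℕ) (hm : m ≤ k) (f g : ℕ → M) :
    ∏ j ∈ range k, (if j < m then f j else g j)
      = (∏ j ∈ range m, f j) * ∏ j ∈ Finset.Ico m k, g j := by
  rw [range_eq_Ico, ← Finset.prod_Ico_consecutive _ (Nat.zero_le m) hm, ← range_eq_Ico]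
  congr 1
  · exact Finset.prod_congr rfl fun j hj => by rw [if_pos (mem_range.1 hj)]
  · exact Finset.prod_congr rfl fun j hj => by rw [if_neg (by simp at hj; omega)]

lemma sum_split {M : Type*} [AddCommMonoid M] (k m : ℕ) (hm : m ≤ k) (f g : ℕ → M) :
    ∑ j ∈ range k, (if j < m then f j else g j)
      = (∑ j ∈ range m, f j) + ∑ j ∈ Finset.Ico m k, g j := by
  rw [range_eq_Ico, ← Finset.sum_Ico_consecutive _ (Nat.zero_le m) hm, ← range_eq_Ico]
  congr 1
  · exact Finset.sum_congr rfl fun j hj => by rw [if_pos (mem_range.1 hj)]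
  · exact Finset.sum_congr rfl fun j hj => by rw [if_neg (by simp at hj; omega)]

lemma prod_const_mul_fun (t : Finset ℕ) (c : ℂ) (f : ℕ → ℂ) :
    ∏ j ∈ t, (c * f j) = c ^ t.card * ∏ j ∈ t, f j := by
  rw [Finset.prod_mul_distrib, Finset.prod_const]

end AuxBasic
section AuxSK

open Finset MvPolynomial

variable (n : ℕ) (q : ℂ) (s : ℕ → ℂ) (k : ℕ) (μ : ℂ)

lemma Fkmu_dependsOn (hn : 0 < n) : DependsOnK n (fun _ => k) (Fkmu n q s k μ) := by
  intro v w h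
  unfold Fkmu
  have hv : ∀ (i : Fin n) (j : Fin k), v i.1 j.1 = w i.1 j.1 :=
    fun i j => h i.1 i.isLt j.1 j.isLt
  have hv' : ∀ (i : Fin n) (j : Fin k), v (cyc n i.1) j.1 = w (cyc n i.1) j.1 :=
    fun i j => h (cyc n i.1) (cyc_lt n i.1 hn) j.1 j.isLt
  congr 1
  · congr 1
    · exact Finset.prod_congr rfl fun i _ => Finset.prod_congr rfl fun j _ =>
        Finset.prod_congr rfl fun j' _ => by rw [hv i j, hv i j']
    · exact Finset.prod_congr rfl fun i _ => by
        rw [Finset.prod_congr rfl fun j (_ : j ∈ univ) => hv i j,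
            Finset.prod_congr rfl fun j (_ : j ∈ univ) => hv' i j]
  · exact Finset.prod_congr rfl fun i _ => Finset.prod_congr rfl fun j _ =>
      Finset.prod_congr rfl fun j' _ => by rw [hv i j, hv' i j']

lemma Fkmu_wheel (hn : 3 ≤ n) (hq : q ≠ 0) (hd : ∀ m : ℕ, 0 < m → q ^ m ≠ 1)
    (d : ℂ) (hd0 : d ≠ 0) : WheelCond n q d (fun _ => k) (Fkmu n q s k μ) := by
  have hq2 : (q:ℂ)^2 ≠ 0 := pow_ne_zero _ hq
  intro v hv i hi
  have key : ∀ j₁ j₂ : ℕ, j₁ < k → j₂ < k → v i j₁ = q^2 * v i j₂ → Fkmu n q s k μ v = 0 := by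
    intro j₁ j₂ hj₁ hj₂ hrel
    have hne : j₁ ≠ j₂ := by
      rintro rfl
      have hvne : v i j₁ ≠ 0 := hv.1 i hi j₁ hj₁
      have h2 : (q^2 - 1) * v i j₁ = 0 := by linear_combination -hrel
      rcases mul_eq_zero.1 h2 with h | h
      · exact hd 2 (by norm_num) (by linear_combination h)
      · exact hvne h
    unfold Fkmu
    have hzero : (∏ i' : Fin n, ∏ j : Fin k, ∏ j' : Fin k,
        if j = j' then 1 else v i'.1 j.1 - (q ^ 2)⁻¹ * v i'.1 j'.1) = 0 := by
      apply Finset.prod_eq_zero (Finset.mem_univ (⟨i, hi⟩ : Fin n))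
      apply Finset.prod_eq_zero (Finset.mem_univ (⟨j₂, hj₂⟩ : Fin k))
      apply Finset.prod_eq_zero (Finset.mem_univ (⟨j₁, hj₁⟩ : Fin k))
      have : (⟨j₂, hj₂⟩ : Fin k) ≠ ⟨j₁, hj₁⟩ := by
        simp only [ne_eq, Fin.mk.injEq]; exact fun h => hne h.symm
      rw [if_neg this]
      simp only [hrel]
      field_simp
      ring
    rw [hzero, zero_mul, zero_div]
  constructor
  · intro j₁ j₂ l hj₁ hj₂ hl h1 h2
    exact key j₁ j₂ hj₁ hj₂ (by rw [h1, h2]; field_simp)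
  · intro j₁ j₂ l hj₁ hj₂ hl h1 h2
    exact key j₁ j₂ hj₁ hj₂ (by rw [h1, h2]; field_simp)

lemma Fkmu_poleDenom_ne (hn : 3 ≤ n) (v : Va) (hv : v ∈ Dom n (fun _ => k)) :
    (∏ i : Fin n, ∏ j : Fin k, ∏ j' : Fin k, (v i.1 j.1 - v (cyc n i.1) j'.1)) ≠ 0 := by
  rw [Finset.prod_ne_zero_iff]
  intro i _
  rw [Finset.prod_ne_zero_iff]
  intro j _
  rw [Finset.prod_ne_zero_iff]
  intro j' _
  refine sub_ne_zero_of_ne (hv.2 i.1 (cyc n i.1) j.1 j'.1 i.isLt (cyc_lt n i.1 (by omega))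
    j.isLt j'.isLt ?_)
  intro h
  exact (cyc_ne n i.1 (by omega) i.isLt) (congrArg Prod.fst h).symm

lemma Fkmu_pole (hn : 3 ≤ n) : PoleCond n (fun _ => k) (Fkmu n q s k μ) := by
  classical
  refine ⟨(∏ i : Fin n, ∏ j : Fin k, ∏ j' : Fin k,
      if j = j' then 1 else (X (i.1, j.1) - C ((q^2)⁻¹) * X (i.1, j'.1))) *
      ∏ i : Fin n, (C (∏ i' ∈ range (i.1+1), s i') * ∏ j : Fin k, X (i.1, j.1)
        - C μ * ∏ j : Fin k, X (cyc n i.1, j.1)), 0, ?_⟩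
  intro v hv
  have hD := Fkmu_poleDenom_ne n k hn v hv
  rw [pow_zero, mul_one]
  have hP : poleDenom n (fun _ => k) v
      = ∏ i : Fin n, ∏ j : Fin k, ∏ j' : Fin k, (v i.1 j.1 - v (cyc n i.1) j'.1) := rfl
  unfold Fkmu
  rw [hP, div_mul_cancel₀ _ hD]
  simp only [map_mul, map_prod, map_sub, map_pow, eval_C, eval_X, apply_ite (eval fun p : ℕ × ℕ => v p.1 p.2), map_one]

lemma Fkmu_deg0 (hn : 0 < n) : Deg0 n (fun _ => k) (Fkmu n q s k μ) := by
  intro v hv ξ hξ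
  unfold Fkmu
  have hE : ∀ i : Fin n, ∀ j : Fin k, (∏ j' : Fin k, (if j = j' then (1:ℂ) else ξ)) = ξ^(k-1) := by
    intro i j
    rw [← Finset.prod_erase_mul _ _ (Finset.mem_univ j), if_pos rfl, mul_one]
    rw [Finset.prod_congr rfl (fun j' hj' => if_neg (by
        intro h; exact (Finset.mem_erase.1 hj').1 h.symm)), Finset.prod_const]
    congr 1
    rw [Finset.card_erase_of_mem (Finset.mem_univ j)]
    simp
  have hA : (∏ i : Fin n, ∏ j : Fin k, ∏ j' : Fin k,
      if j = j' then 1 else ξ * v i.1 j.1 - (q ^ 2)⁻¹ * (ξ * v i.1 j'.1))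
      = ξ^(n*(k*(k-1))) * ∏ i : Fin n, ∏ j : Fin k, ∏ j' : Fin k,
        (if j = j' then 1 else v i.1 j.1 - (q ^ 2)⁻¹ * v i.1 j'.1) := by
    have : ∀ (i : Fin n) (j j' : Fin k),
        (if j = j' then (1:ℂ) else ξ * v i.1 j.1 - (q ^ 2)⁻¹ * (ξ * v i.1 j'.1))
        = (if j = j' then 1 else ξ) * (if j = j' then 1 else v i.1 j.1 - (q ^ 2)⁻¹ * v i.1 j'.1) := by
      intro i j j'
      by_cases h : j = j' <;> simp [h] <;> ring
    simp only [this, Finset.prod_mul_distrib]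
    congr 1
    rw [Finset.prod_congr rfl (fun i _ => Finset.prod_congr rfl (fun j _ => hE i j))]
    simp only [Finset.prod_const, Finset.card_univ, Fintype.card_fin, ← pow_mul]
    congr 1
    ring
  have hB : (∏ i : Fin n, ((∏ i' ∈ range (i.1 + 1), s i') * ∏ j : Fin k, ξ * v i.1 j.1
      - μ * ∏ j : Fin k, ξ * v (cyc n i.1) j.1))
      = ξ^(n*k) * ∏ i : Fin n, ((∏ i' ∈ range (i.1 + 1), s i') * ∏ j : Fin k, v i.1 j.1
      - μ * ∏ j : Fin k, v (cyc n i.1) j.1) := by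
    have : ∀ i : Fin n, ((∏ i' ∈ range (i.1 + 1), s i') * ∏ j : Fin k, ξ * v i.1 j.1
        - μ * ∏ j : Fin k, ξ * v (cyc n i.1) j.1)
        = ξ^k * ((∏ i' ∈ range (i.1 + 1), s i') * ∏ j : Fin k, v i.1 j.1
        - μ * ∏ j : Fin k, v (cyc n i.1) j.1) := by
      intro i
      rw [Finset.prod_mul_distrib, Finset.prod_mul_distrib, Finset.prod_const]
      simp only [Finset.card_univ, Fintype.card_fin]
      ring
    rw [Finset.prod_congr rfl (fun i (_ : i ∈ Finset.univ) => this i), Finset.prod_mul_distrib,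
      Finset.prod_const, Finset.card_univ, Fintype.card_fin, ← pow_mul]
    congr 2
    ring
  have hD : (∏ i : Fin n, ∏ j : Fin k, ∏ j' : Fin k, (ξ * v i.1 j.1 - ξ * v (cyc n i.1) j'.1))
      = ξ^(n*(k*k)) * ∏ i : Fin n, ∏ j : Fin k, ∏ j' : Fin k, (v i.1 j.1 - v (cyc n i.1) j'.1) := by
    have : ∀ (i : Fin n) (j j' : Fin k), (ξ * v i.1 j.1 - ξ * v (cyc n i.1) j'.1)
        = ξ * (v i.1 j.1 - v (cyc n i.1) j'.1) := fun i j j' => by ring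
    simp only [this, Finset.prod_mul_distrib, Finset.prod_const, Finset.card_univ,
      Fintype.card_fin, ← pow_mul]
    congr 2
    ring
  simp only [hA, hB, hD]
  rw [mul_mul_mul_comm, ← pow_add]
  have hee : n*(k*(k-1)) + n*k = n*(k*k) := by
    rcases Nat.eq_zero_or_pos k with rfl | hk
    · simp
    · have : k - 1 + 1 = k := by omega
      calc n*(k*(k-1)) + n*k = n*(k*(k-1)+k) := by ring
      _ = n*(k*((k-1)+1)) := by ring
      _ = n*(k*k) := by rw [this]
  rw [hee, mul_div_mul_left _ _ (pow_ne_zero _ hξ)]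

end AuxSK
section AuxSymm

open Finset

/-- restrict a permutation of `ℕ` fixing `[k, ∞)` to `Fin k` -/
lemma perm_restrict (k : ℕ) (σ : Equiv.Perm ℕ) (hσ : ∀ j, k ≤ j → σ j = j) :
    ∃ e : Equiv.Perm (Fin k), ∀ j : Fin k, (e j : ℕ) = σ j.1 := by
  have hlt : ∀ j : ℕ, j < k → σ j < k := by
    intro j hj
    by_contra h
    push_neg at h
    have := hσ (σ j) h
    have : σ (σ j) = σ j := this
    have : σ j = j := σ.injective this
    omega
  have hlt' : ∀ j : ℕ, j < k → σ.symm j < k := by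
    intro j hj
    by_contra h
    push_neg at h
    have h1 := hσ (σ.symm j) h
    rw [Equiv.apply_symm_apply] at h1
    omega
  refine ⟨⟨fun j => ⟨σ j.1, hlt j.1 j.isLt⟩, fun j => ⟨σ.symm j.1, hlt' j.1 j.isLt⟩,
    fun j => by simp, fun j => by simp⟩, fun j => rfl⟩

lemma Fkmu_symmIn (n : ℕ) (q : ℂ) (s : ℕ → ℂ) (k : ℕ) (μ : ℂ) (hn : 3 ≤ n) :
    SymmIn n (fun _ => k) (Fkmu n q s k μ) := by
  intro v i₀ hi₀ σ hσ
  obtain ⟨e, he⟩ := perm_restrict k σ hσ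
  set v' : Va := fun i j => if i = i₀ then v i (σ j) else v i j with hv'
  have hgroup : ∀ c, (∏ j : Fin k, v' c j.1) = ∏ j : Fin k, v c j.1 := by
    intro c
    by_cases hc : c = i₀
    · have h1 : ∀ j : Fin k, v' c j.1 = v c ((e j).1) := by
        intro j; rw [he j]; simp [hv', hc]
      rw [Finset.prod_congr rfl (fun j _ => h1 j)]
      exact Equiv.prod_comp e (fun j => v c j.1)
    · exact Finset.prod_congr rfl (fun j _ => by simp [hv', hc])
  have hval : ∀ c j, c ≠ i₀ → v' c j = v c j := by intro c j hc; simp [hv', hc]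
  have hvali : ∀ (j : Fin k), v' i₀ j.1 = v i₀ ((e j).1) := by
    intro j; rw [he j]; simp [hv']
  unfold Fkmu
  congr 1
  · congr 1
    · -- the A part
      apply Finset.prod_congr rfl
      intro i _
      by_cases hc : i.1 = i₀
      · have key : ∀ j j' : Fin k,
            (if j = j' then (1:ℂ) else v' i.1 j.1 - (q ^ 2)⁻¹ * v' i.1 j'.1)
            = (fun a b : Fin k => if a = b then (1:ℂ) else v i.1 a.1 - (q ^ 2)⁻¹ * v i.1 b.1) (e j) (e j') := by
          intro j j'
          simp only [hc, hvali, EmbeddingLike.apply_eq_iff_eq]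
        rw [Finset.prod_congr rfl (fun j _ => Finset.prod_congr rfl (fun j' _ => key j j'))]
        rw [Finset.prod_congr rfl (fun j (_ : j ∈ univ) =>
          Equiv.prod_comp e (fun b => (fun a b : Fin k => if a = b then (1:ℂ) else v i.1 a.1 - (q ^ 2)⁻¹ * v i.1 b.1) (e j) b))]
        exact Equiv.prod_comp e (fun a => ∏ b : Fin k, if a = b then (1:ℂ) else v i.1 a.1 - (q ^ 2)⁻¹ * v i.1 b.1)
      · exact Finset.prod_congr rfl (fun j _ => Finset.prod_congr rfl (fun j' _ => by
          rw [hval i.1 j.1 hc, hval i.1 j'.1 hc]))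
    · -- the B part
      apply Finset.prod_congr rfl
      intro i _
      rw [hgroup i.1, hgroup (cyc n i.1)]
  · -- the D part
    apply Finset.prod_congr rfl
    intro i _
    have hne : cyc n i.1 ≠ i.1 := cyc_ne n i.1 (by omega) i.isLt
    by_cases hc : i.1 = i₀
    · have hc2 : cyc n i.1 ≠ i₀ := by rw [← hc] at *; exact hne
      have key : ∀ j j' : Fin k, v' i.1 j.1 - v' (cyc n i.1) j'.1
          = v i.1 ((e j).1) - v (cyc n i.1) j'.1 := by
        intro j j'
        rw [hval (cyc n i.1) j'.1 hc2]
        congr 1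
        rw [← hc] at hvali
        exact hvali j
      rw [Finset.prod_congr rfl (fun j _ => Finset.prod_congr rfl (fun j' _ => key j j'))]
      exact Equiv.prod_comp e (fun a => ∏ j' : Fin k, (v i.1 a.1 - v (cyc n i.1) j'.1))
    · by_cases hc2 : cyc n i.1 = i₀
      · have key : ∀ j j' : Fin k, v' i.1 j.1 - v' (cyc n i.1) j'.1
            = v i.1 j.1 - v (cyc n i.1) ((e j').1) := by
          intro j j'
          rw [hval i.1 j.1 hc]
          congr 1
          rw [he j']
          simp [hv', hc2]
        rw [Finset.prod_congr rfl (fun j _ => Finset.prod_congr rfl (fun j' _ => key j j'))]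
        exact Finset.prod_congr rfl (fun j _ =>
          Equiv.prod_comp e (fun b => v i.1 j.1 - v (cyc n i.1) b.1))
      · exact Finset.prod_congr rfl (fun j _ => Finset.prod_congr rfl (fun j' _ => by
          rw [hval i.1 j.1 hc, hval (cyc n i.1) j'.1 hc2]))

end AuxSymm
section AuxLim

open Finset

/-- partial products of `s` -/
def SPa (s : ℕ → ℂ) (i : ℕ) : ℂ := ∏ r ∈ Finset.range (i+1), s r
/-- full product of the variables of group `i` -/
def XPa (v : Va) (k i : ℕ) : ℂ := ∏ j ∈ Finset.range k, v i j
/-- product of the scaled variables of group `i` -/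
def PPa (v : Va) (m : ℕ → ℕ) (i : ℕ) : ℂ := ∏ j ∈ Finset.range (m i), v i j
/-- product of the unscaled variables of group `i` -/
def QPa (v : Va) (k : ℕ) (m : ℕ → ℕ) (i : ℕ) : ℂ := ∏ j ∈ Finset.Ico (m i) k, v i j
/-- scaling exponent of variable `(i,j)` -/
def ala (m : ℕ → ℕ) (i j : ℕ) : ℕ := if j < m i then 1 else 0
/-- a binomial `A ξ^e - B ξ^f` -/
def linF (e f : ℕ) (A B ξ : ℂ) : ℂ := A * ξ ^ e - B * ξ ^ f

def idT : ℕ × ℕ → ℕ × ℕ := fun p => p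
def lowT : ℕ × ℕ → ℕ × ℕ := fun p => (p.1 - min p.1 p.2, p.2 - min p.1 p.2)
def topT : ℕ × ℕ → ℕ × ℕ := fun p => (max p.1 p.2 - p.1, max p.1 p.2 - p.2)

/-- numerator of `F_k^μ` after scaling the first `m i` variables of group `i` by `ξ`,
with exponent pairs transformed by `T` -/
def NFgen (n k : ℕ) (q μ : ℂ) (s : ℕ → ℂ) (v : Va) (m : ℕ → ℕ) (T : ℕ × ℕ → ℕ × ℕ) (ξ : ℂ) : ℂ :=
  (∏ i ∈ range n, ∏ j ∈ range k, ∏ j' ∈ range k,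
      if j = j' then 1
      else linF (T (ala m i j, ala m i j')).1 (T (ala m i j, ala m i j')).2
        (v i j) ((q^2)⁻¹ * v i j') ξ) *
  ∏ i ∈ range n, linF (T (m i, m (cyc n i))).1 (T (m i, m (cyc n i))).2
      (SPa s i * XPa v k i) (μ * XPa v k (cyc n i)) ξ

/-- denominator of `F_k^μ` after scaling -/
def DFgen (n k : ℕ) (v : Va) (m : ℕ → ℕ) (T : ℕ × ℕ → ℕ × ℕ) (ξ : ℂ) : ℂ :=
  ∏ i ∈ range n, ∏ j ∈ range k, ∏ j' ∈ range k,
    linF (T (ala m i j, ala m (cyc n i) j')).1 (T (ala m i j, ala m (cyc n i) j')).2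
      (v i j) (v (cyc n i) j') ξ

/-- valuation of the numerator -/
def eNa (n k : ℕ) (m : ℕ → ℕ) : ℕ :=
  (∑ i ∈ range n, ∑ j ∈ range k, ∑ j' ∈ range k,
    if j = j' then 0 else min (ala m i j) (ala m i j'))
  + ∑ i ∈ range n, min (m i) (m (cyc n i))

/-- degree of the numerator -/
def ENa (n k : ℕ) (m : ℕ → ℕ) : ℕ :=
  (∑ i ∈ range n, ∑ j ∈ range k, ∑ j' ∈ range k,
    if j = j' then 0 else max (ala m i j) (ala m i j'))
  + ∑ i ∈ range n, max (m i) (m (cyc n i))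

/-- valuation of the denominator -/
def eDa (n k : ℕ) (m : ℕ → ℕ) : ℕ :=
  ∑ i ∈ range n, ∑ j ∈ range k, ∑ j' ∈ range k, min (ala m i j) (ala m (cyc n i) j')

/-- degree of the denominator -/
def EDa (n k : ℕ) (m : ℕ → ℕ) : ℕ :=
  ∑ i ∈ range n, ∑ j ∈ range k, ∑ j' ∈ range k, max (ala m i j) (ala m (cyc n i) j')

lemma pow_split (a b c : ℕ) (h : a + b = c) (A ξ : ℂ) : ξ^a * (A * ξ^b) = A * ξ^c := by
  rw [← h, pow_add]; ring

lemma pow_split_inv (a b c : ℕ) (h : b + c = a) (A ξ : ℂ) (hξ : ξ ≠ 0) :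
    ξ^a * (A * ξ⁻¹^b) = A * ξ^c := by
  have hb : ξ^b ≠ 0 := pow_ne_zero _ hξ
  rw [← h, pow_add, inv_pow]
  field_simp

lemma linF_low (e f : ℕ) (A B ξ : ℂ) :
    linF e f A B ξ = ξ ^ (min e f) * linF (e - min e f) (f - min e f) A B ξ := by
  unfold linF
  rw [mul_sub, pow_split (min e f) (e - min e f) e (by omega) A ξ,
    pow_split (min e f) (f - min e f) f (by omega) B ξ]

lemma linF_top (e f : ℕ) (A B ξ : ℂ) (hξ : ξ ≠ 0) :
    ξ ^ (max e f) * linF e f A B ξ⁻¹ = linF (max e f - e) (max e f - f) A B ξ := by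
  unfold linF
  rw [mul_sub, pow_split_inv (max e f) e (max e f - e) (by omega) A ξ hξ,
    pow_split_inv (max e f) f (max e f - f) (by omega) B ξ hξ]

lemma linF_cont (e f : ℕ) (A B : ℂ) : Continuous (linF e f A B) := by
  unfold linF; fun_prop

lemma NFgen_cont (n k : ℕ) (q μ : ℂ) (s : ℕ → ℂ) (v : Va) (m : ℕ → ℕ) (T : ℕ × ℕ → ℕ × ℕ) :
    Continuous (NFgen n k q μ s v m T) := by
  unfold NFgen
  apply Continuous.mul
  · apply continuous_finset_prod
    intro i _
    apply continuous_finset_prod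
    intro j _
    apply continuous_finset_prod
    intro j' _
    by_cases h : j = j'
    · simp only [h, if_pos rfl]; exact continuous_const
    · simp only [if_neg h]; exact linF_cont _ _ _ _
  · apply continuous_finset_prod
    intro i _
    exact linF_cont _ _ _ _

lemma DFgen_cont (n k : ℕ) (v : Va) (m : ℕ → ℕ) (T : ℕ × ℕ → ℕ × ℕ) :
    Continuous (DFgen n k v m T) := by
  unfold DFgen
  apply continuous_finset_prod
  intro i _
  apply continuous_finset_prod
  intro j _
  apply continuous_finset_prod
  intro j' _
  exact linF_cont _ _ _ _

lemma NFgen_low_decomp (n k : ℕ) (q μ : ℂ) (s : ℕ → ℂ) (v : Va) (m : ℕ → ℕ) (ξ : ℂ) :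
    NFgen n k q μ s v m idT ξ = ξ ^ (eNa n k m) * NFgen n k q μ s v m lowT ξ := by
  unfold NFgen eNa
  rw [pow_add, mul_mul_mul_comm]
  congr 1
  · rw [← Finset.prod_pow_eq_pow_sum, ← Finset.prod_mul_distrib]
    apply Finset.prod_congr rfl
    intro i _
    rw [← Finset.prod_pow_eq_pow_sum, ← Finset.prod_mul_distrib]
    apply Finset.prod_congr rfl
    intro j _
    rw [← Finset.prod_pow_eq_pow_sum, ← Finset.prod_mul_distrib]
    apply Finset.prod_congr rfl
    intro j' _
    by_cases h : j = j'
    · simp [h, idT, lowT]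
    · simp only [if_neg h]
      exact linF_low _ _ _ _ _
  · rw [← Finset.prod_pow_eq_pow_sum, ← Finset.prod_mul_distrib]
    apply Finset.prod_congr rfl
    intro i _
    exact linF_low _ _ _ _ _

lemma DFgen_low_decomp (n k : ℕ) (v : Va) (m : ℕ → ℕ) (ξ : ℂ) :
    DFgen n k v m idT ξ = ξ ^ (eDa n k m) * DFgen n k v m lowT ξ := by
  unfold DFgen eDa
  rw [← Finset.prod_pow_eq_pow_sum, ← Finset.prod_mul_distrib]
  apply Finset.prod_congr rfl
  intro i _
  rw [← Finset.prod_pow_eq_pow_sum, ← Finset.prod_mul_distrib]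
  apply Finset.prod_congr rfl
  intro j _
  rw [← Finset.prod_pow_eq_pow_sum, ← Finset.prod_mul_distrib]
  apply Finset.prod_congr rfl
  intro j' _
  exact linF_low _ _ _ _ _

lemma NFgen_top_decomp (n k : ℕ) (q μ : ℂ) (s : ℕ → ℂ) (v : Va) (m : ℕ → ℕ) (ξ : ℂ)
    (hξ : ξ ≠ 0) :
    ξ ^ (ENa n k m) * NFgen n k q μ s v m idT ξ⁻¹ = NFgen n k q μ s v m topT ξ := by
  unfold NFgen ENa
  rw [pow_add]
  rw [mul_mul_mul_comm]
  congr 1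
  · rw [← Finset.prod_pow_eq_pow_sum, ← Finset.prod_mul_distrib]
    apply Finset.prod_congr rfl
    intro i _
    rw [← Finset.prod_pow_eq_pow_sum, ← Finset.prod_mul_distrib]
    apply Finset.prod_congr rfl
    intro j _
    rw [← Finset.prod_pow_eq_pow_sum, ← Finset.prod_mul_distrib]
    apply Finset.prod_congr rfl
    intro j' _
    by_cases h : j = j'
    · simp [h, idT, topT]
    · simp only [if_neg h]
      exact linF_top _ _ _ _ _ hξ
  · rw [← Finset.prod_pow_eq_pow_sum, ← Finset.prod_mul_distrib]
    apply Finset.prod_congr rfl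
    intro i _
    exact linF_top _ _ _ _ _ hξ

lemma DFgen_top_decomp (n k : ℕ) (v : Va) (m : ℕ → ℕ) (ξ : ℂ) (hξ : ξ ≠ 0) :
    ξ ^ (EDa n k m) * DFgen n k v m idT ξ⁻¹ = DFgen n k v m topT ξ := by
  unfold DFgen EDa
  rw [← Finset.prod_pow_eq_pow_sum, ← Finset.prod_mul_distrib]
  apply Finset.prod_congr rfl
  intro i _
  rw [← Finset.prod_pow_eq_pow_sum, ← Finset.prod_mul_distrib]
  apply Finset.prod_congr rfl
  intro j _
  rw [← Finset.prod_pow_eq_pow_sum, ← Finset.prod_mul_distrib]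
  apply Finset.prod_congr rfl
  intro j' _
  exact linF_top _ _ _ _ _ hξ

end AuxLim
section AuxComb

open Finset

lemma sum_ala (k : ℕ) (m : ℕ → ℕ) (i : ℕ) (hm : m i ≤ k) :
    ∑ j ∈ range k, ala m i j = m i := by
  unfold ala
  rw [sum_split k (m i) hm (fun _ => 1) (fun _ => 0)]
  simp

lemma sum_diag (k : ℕ) (f : ℕ → ℕ) :
    ∑ j ∈ range k, ∑ j' ∈ range k, (if j = j' then f j else 0) = ∑ j ∈ range k, f j := by
  apply Finset.sum_congr rfl
  intro j hj
  rw [Finset.sum_ite_eq (range k) j (fun _ => f j), if_pos hj]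

lemma sum2_add (k : ℕ) (F G : ℕ → ℕ → ℕ) :
    (∑ j ∈ range k, ∑ j' ∈ range k, F j j') + (∑ j ∈ range k, ∑ j' ∈ range k, G j j')
      = ∑ j ∈ range k, ∑ j' ∈ range k, (F j j' + G j j') := by
  rw [← Finset.sum_add_distrib]
  exact Finset.sum_congr rfl fun j _ => by rw [← Finset.sum_add_distrib]

lemma innerA_min (k : ℕ) (m : ℕ → ℕ) (i : ℕ) (hm : m i ≤ k) :
    (∑ j ∈ range k, ∑ j' ∈ range k, if j = j' then 0 else min (ala m i j) (ala m i j'))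
      + m i = m i * m i := by
  have key : ∀ j j' : ℕ, (if j = j' then 0 else min (ala m i j) (ala m i j'))
      + (if j = j' then ala m i j else 0) = ala m i j * ala m i j' := by
    intro j j'
    unfold ala
    split_ifs <;> omega
  calc (∑ j ∈ range k, ∑ j' ∈ range k, if j = j' then 0 else min (ala m i j) (ala m i j'))
      + m i
      = (∑ j ∈ range k, ∑ j' ∈ range k, if j = j' then 0 else min (ala m i j) (ala m i j'))
      + ∑ j ∈ range k, ∑ j' ∈ range k, (if j = j' then ala m i j else 0) := by
        rw [sum_diag k (fun j => ala m i j), sum_ala k m i hm]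
    _ = ∑ j ∈ range k, ∑ j' ∈ range k, ((if j = j' then 0 else min (ala m i j) (ala m i j'))
        + (if j = j' then ala m i j else 0)) := by
        rw [← Finset.sum_add_distrib]
        exact Finset.sum_congr rfl fun j _ => by rw [← Finset.sum_add_distrib]
    _ = ∑ j ∈ range k, ∑ j' ∈ range k, ala m i j * ala m i j' := by
        exact Finset.sum_congr rfl fun j _ => Finset.sum_congr rfl fun j' _ => key j j'
    _ = (∑ j ∈ range k, ala m i j) * (∑ j' ∈ range k, ala m i j') := by
        rw [Finset.sum_mul_sum]
    _ = m i * m i := by rw [sum_ala k m i hm]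

lemma innerA_max (k : ℕ) (m : ℕ → ℕ) (i : ℕ) (hm : m i ≤ k) :
    (∑ j ∈ range k, ∑ j' ∈ range k, if j = j' then 0 else max (ala m i j) (ala m i j'))
      + m i + m i * m i = 2 * (k * m i) := by
  have key : ∀ j j' : ℕ, (if j = j' then 0 else max (ala m i j) (ala m i j'))
      + (if j = j' then ala m i j else 0) + ala m i j * ala m i j'
      = ala m i j + ala m i j' := by
    intro j j'
    unfold ala
    split_ifs <;> omega
  have expand : ∑ j ∈ range k, ∑ j' ∈ range k, (ala m i j + ala m i j') = 2 * (k * m i) := by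
    have inner : ∀ j, ∑ j' ∈ range k, (ala m i j + ala m i j') = k * ala m i j + m i := by
      intro j
      rw [Finset.sum_add_distrib, Finset.sum_const, Finset.card_range, sum_ala k m i hm,
        smul_eq_mul]
    rw [Finset.sum_congr rfl fun j (_ : j ∈ range k) => inner j, Finset.sum_add_distrib,
      ← Finset.mul_sum, sum_ala k m i hm, Finset.sum_const, Finset.card_range, smul_eq_mul]
    ring
  calc (∑ j ∈ range k, ∑ j' ∈ range k, if j = j' then 0 else max (ala m i j) (ala m i j'))
      + m i + m i * m i
      = (∑ j ∈ range k, ∑ j' ∈ range k, if j = j' then 0 else max (ala m i j) (ala m i j'))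
      + (∑ j ∈ range k, ∑ j' ∈ range k, (if j = j' then ala m i j else 0))
      + ∑ j ∈ range k, ∑ j' ∈ range k, ala m i j * ala m i j' := by
        rw [sum_diag k (fun j => ala m i j), ← Finset.sum_mul_sum, sum_ala k m i hm]
    _ = ∑ j ∈ range k, ∑ j' ∈ range k, ((if j = j' then 0 else max (ala m i j) (ala m i j'))
        + (if j = j' then ala m i j else 0) + ala m i j * ala m i j') := by
        rw [sum2_add, sum2_add]
    _ = ∑ j ∈ range k, ∑ j' ∈ range k, (ala m i j + ala m i j') :=
        Finset.sum_congr rfl fun j _ => Finset.sum_congr rfl fun j' _ => key j j'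
    _ = 2 * (k * m i) := expand

lemma innerD_min (n k : ℕ) (m : ℕ → ℕ) (i : ℕ) (hm : m i ≤ k) (hm' : m (cyc n i) ≤ k) :
    (∑ j ∈ range k, ∑ j' ∈ range k, min (ala m i j) (ala m (cyc n i) j'))
      = m i * m (cyc n i) := by
  have key : ∀ j j' : ℕ, min (ala m i j) (ala m (cyc n i) j')
      = ala m i j * ala m (cyc n i) j' := by
    intro j j'
    unfold ala
    split_ifs <;> omega
  rw [Finset.sum_congr rfl fun j (_ : j ∈ range k) =>
    Finset.sum_congr rfl fun j' (_ : j' ∈ range k) => key j j', ← Finset.sum_mul_sum,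
    sum_ala k m i hm, sum_ala k m (cyc n i) hm']

lemma innerD_max (n k : ℕ) (m : ℕ → ℕ) (i : ℕ) (hm : m i ≤ k) (hm' : m (cyc n i) ≤ k) :
    (∑ j ∈ range k, ∑ j' ∈ range k, max (ala m i j) (ala m (cyc n i) j'))
      + m i * m (cyc n i) = k * m i + k * m (cyc n i) := by
  have key : ∀ j j' : ℕ, max (ala m i j) (ala m (cyc n i) j')
      + ala m i j * ala m (cyc n i) j' = ala m i j + ala m (cyc n i) j' := by
    intro j j'
    unfold ala
    split_ifs <;> omega
  have expand : ∑ j ∈ range k, ∑ j' ∈ range k, (ala m i j + ala m (cyc n i) j')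
      = k * m i + k * m (cyc n i) := by
    have inner : ∀ j, ∑ j' ∈ range k, (ala m i j + ala m (cyc n i) j')
        = k * ala m i j + m (cyc n i) := by
      intro j
      rw [Finset.sum_add_distrib, Finset.sum_const, Finset.card_range,
        sum_ala k m (cyc n i) hm', smul_eq_mul]
    rw [Finset.sum_congr rfl fun j (_ : j ∈ range k) => inner j, Finset.sum_add_distrib,
      ← Finset.mul_sum, sum_ala k m i hm, Finset.sum_const, Finset.card_range, smul_eq_mul]
  calc (∑ j ∈ range k, ∑ j' ∈ range k, max (ala m i j) (ala m (cyc n i) j'))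
      + m i * m (cyc n i)
      = (∑ j ∈ range k, ∑ j' ∈ range k, max (ala m i j) (ala m (cyc n i) j'))
      + ∑ j ∈ range k, ∑ j' ∈ range k, ala m i j * ala m (cyc n i) j' := by
        rw [← Finset.sum_mul_sum, sum_ala k m i hm, sum_ala k m (cyc n i) hm']
    _ = ∑ j ∈ range k, ∑ j' ∈ range k, (max (ala m i j) (ala m (cyc n i) j')
        + ala m i j * ala m (cyc n i) j') := by rw [sum2_add]
    _ = ∑ j ∈ range k, ∑ j' ∈ range k, (ala m i j + ala m (cyc n i) j') :=
        Finset.sum_congr rfl fun j _ => Finset.sum_congr rfl fun j' _ => key j j'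
    _ = k * m i + k * m (cyc n i) := expand

/-- the two exponent identities -/
lemma exp_identities (n k : ℕ) (m : ℕ → ℕ) (hm : ∀ i, i < n → m i ≤ k)
    (hstep : ∀ i, i < n → m (cyc n i) ≤ m i + 1 ∧ m i ≤ m (cyc n i) + 1) :
    eNa n k m = eDa n k m ∧ ENa n k m = EDa n k m := by
  have hn0 : ∀ i, i ∈ range n → m i ≤ k := fun i hi => hm i (mem_range.1 hi)
  have hm' : ∀ i, i ∈ range n → m (cyc n i) ≤ k := by
    intro i hi
    rcases Nat.eq_zero_or_pos n with rfl | hn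
    · simp at hi
    · exact hm _ (cyc_lt n i hn)
  have hstep' : ∀ i ∈ range n, m (cyc n i) ≤ m i + 1 ∧ m i ≤ m (cyc n i) + 1 :=
    fun i hi => hstep i (mem_range.1 hi)
  -- ℕ-level closed forms
  have hNa : eNa n k m + ∑ i ∈ range n, m i
      = (∑ i ∈ range n, m i * m i) + ∑ i ∈ range n, min (m i) (m (cyc n i)) := by
    have h : ∑ i ∈ range n, ((∑ j ∈ range k, ∑ j' ∈ range k,
        if j = j' then 0 else min (ala m i j) (ala m i j')) + m i)
        = ∑ i ∈ range n, m i * m i :=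
      Finset.sum_congr rfl fun i hi => innerA_min k m i (hn0 i hi)
    rw [Finset.sum_add_distrib] at h
    unfold eNa
    omega
  have hEa : ENa n k m + ∑ i ∈ range n, m i + ∑ i ∈ range n, m i * m i
      = (∑ i ∈ range n, 2 * (k * m i)) + ∑ i ∈ range n, max (m i) (m (cyc n i)) := by
    have h : ∑ i ∈ range n, ((∑ j ∈ range k, ∑ j' ∈ range k,
        if j = j' then 0 else max (ala m i j) (ala m i j')) + m i + m i * m i)
        = ∑ i ∈ range n, 2 * (k * m i) :=
      Finset.sum_congr rfl fun i hi => innerA_max k m i (hn0 i hi)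
    rw [Finset.sum_add_distrib, Finset.sum_add_distrib] at h
    unfold ENa
    omega
  have hDa : eDa n k m = ∑ i ∈ range n, m i * m (cyc n i) := by
    unfold eDa
    exact Finset.sum_congr rfl fun i hi => innerD_min n k m i (hn0 i hi) (hm' i hi)
  have hEDa : EDa n k m + ∑ i ∈ range n, m i * m (cyc n i)
      = ∑ i ∈ range n, (k * m i + k * m (cyc n i)) := by
    unfold EDa
    rw [← Finset.sum_add_distrib]
    exact Finset.sum_congr rfl fun i hi => innerD_max n k m i (hn0 i hi) (hm' i hi)
  -- pass to ℤ
  have hS1 : ∑ i ∈ range n, (m (cyc n i) : ℤ) = ∑ i ∈ range n, (m i : ℤ) :=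
    sum_cyc n (fun i => (m i : ℤ))
  have hS2 : ∑ i ∈ range n, ((m (cyc n i) : ℤ) * (m (cyc n i) : ℤ))
      = ∑ i ∈ range n, ((m i : ℤ) * (m i : ℤ)) := sum_cyc n (fun i => (m i : ℤ) * (m i : ℤ))
  have hab : ∑ i ∈ range n, (if m i < m (cyc n i) then (1:ℤ) else 0)
      = ∑ i ∈ range n, (if m (cyc n i) < m i then (1:ℤ) else 0) := by
    have h0 : ∑ i ∈ range n, ((m (cyc n i) : ℤ) - (m i : ℤ)) = 0 := by
      rw [Finset.sum_sub_distrib, hS1, sub_self]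
    have h1 : ∀ i ∈ range n, (m (cyc n i) : ℤ) - (m i : ℤ)
        = (if m i < m (cyc n i) then (1:ℤ) else 0) - (if m (cyc n i) < m i then (1:ℤ) else 0) := by
      intro i hi
      have := hstep' i hi
      split_ifs <;> omega
    rw [Finset.sum_congr rfl h1, Finset.sum_sub_distrib] at h0
    omega
  have hsq : ∑ i ∈ range n, ((m i : ℤ) * (m i : ℤ) - (m i : ℤ) * (m (cyc n i) : ℤ))
      = ∑ i ∈ range n, (if m (cyc n i) < m i then (1:ℤ) else 0) := by
    have h1 : ∀ i ∈ range n, ((m i : ℤ) - (m (cyc n i) : ℤ)) ^ 2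
        = (if m i < m (cyc n i) then (1:ℤ) else 0) + (if m (cyc n i) < m i then (1:ℤ) else 0) := by
      intro i hi
      have := hstep' i hi
      by_cases h2 : m i < m (cyc n i)
      · rw [if_pos h2, if_neg (by omega)]
        have h4 : (m (cyc n i) : ℤ) = (m i : ℤ) + 1 := by omega
        rw [h4]; ring
      · by_cases h3 : m (cyc n i) < m i
        · rw [if_neg h2, if_pos h3]
          have h4 : (m i : ℤ) = (m (cyc n i) : ℤ) + 1 := by omega
          rw [h4]; ring
        · rw [if_neg h2, if_neg h3]
          have h4 : (m i : ℤ) = (m (cyc n i) : ℤ) := by omega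
          rw [h4]; ring
    have h2 : ∑ i ∈ range n, ((m i : ℤ) - (m (cyc n i) : ℤ))^2
        = ∑ i ∈ range n, ((if m i < m (cyc n i) then (1:ℤ) else 0)
          + (if m (cyc n i) < m i then (1:ℤ) else 0)) :=
      Finset.sum_congr rfl h1
    have h3 : ∀ i ∈ range n, ((m i : ℤ) - (m (cyc n i) : ℤ))^2
        = ((m i:ℤ) * (m i:ℤ) - (m i:ℤ) * (m (cyc n i):ℤ))
          + ((m (cyc n i):ℤ) * (m (cyc n i):ℤ)) - ((m i:ℤ) * (m (cyc n i):ℤ)) := by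
      intro i _; ring
    rw [Finset.sum_congr rfl h3, Finset.sum_sub_distrib, Finset.sum_add_distrib] at h2
    rw [Finset.sum_add_distrib] at h2
    rw [hS2] at h2
    have h5 : ∑ i ∈ range n, ((m i:ℤ) * (m i:ℤ) - (m i:ℤ) * (m (cyc n i):ℤ))
        = ∑ i ∈ range n, ((m i:ℤ) * (m i:ℤ)) - ∑ i ∈ range n, ((m i:ℤ) * (m (cyc n i):ℤ)) :=
      Finset.sum_sub_distrib _ _
    omega
  have hmin : ∑ i ∈ range n, min (m i : ℤ) (m (cyc n i) : ℤ)
      = ∑ i ∈ range n, (m i : ℤ) - ∑ i ∈ range n, (if m (cyc n i) < m i then (1:ℤ) else 0) := by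
    rw [← Finset.sum_sub_distrib]
    apply Finset.sum_congr rfl
    intro i hi
    have := hstep' i hi
    split_ifs <;> omega
  have hmax : ∑ i ∈ range n, max (m i : ℤ) (m (cyc n i) : ℤ)
      = ∑ i ∈ range n, (m i : ℤ) + ∑ i ∈ range n, (if m i < m (cyc n i) then (1:ℤ) else 0) := by
    rw [← Finset.sum_add_distrib]
    apply Finset.sum_congr rfl
    intro i hi
    have := hstep' i hi
    split_ifs <;> omega
  have h5 : ∑ i ∈ range n, ((m i:ℤ) * (m i:ℤ) - (m i:ℤ) * (m (cyc n i):ℤ))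
      = ∑ i ∈ range n, ((m i:ℤ) * (m i:ℤ)) - ∑ i ∈ range n, ((m i:ℤ) * (m (cyc n i):ℤ)) :=
    Finset.sum_sub_distrib _ _
  have hcastNa := congrArg (Nat.cast : ℕ → ℤ) hNa
  have hcastEa := congrArg (Nat.cast : ℕ → ℤ) hEa
  have hcastDa := congrArg (Nat.cast : ℕ → ℤ) hDa
  have hcastEDa := congrArg (Nat.cast : ℕ → ℤ) hEDa
  push_cast at hcastNa hcastEa hcastDa hcastEDa
  have hsplitE : ∑ i ∈ range n, ((k:ℤ) * (m i:ℤ) + (k:ℤ) * (m (cyc n i):ℤ))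
      = (k:ℤ) * ∑ i ∈ range n, (m i:ℤ) + (k:ℤ) * ∑ i ∈ range n, (m (cyc n i):ℤ) := by
    rw [Finset.sum_add_distrib, Finset.mul_sum, Finset.mul_sum]
  have hsplit2 : ∑ i ∈ range n, (2 * ((k:ℤ) * (m i:ℤ)))
      = 2 * ((k:ℤ) * ∑ i ∈ range n, (m i:ℤ)) := by
    rw [Finset.mul_sum]
    congr 1
    rw [Finset.mul_sum]
  constructor
  · have : (eNa n k m : ℤ) = (eDa n k m : ℤ) := by
      rw [hcastDa]
      omega
    exact_mod_cast this
  · have : (ENa n k m : ℤ) = (EDa n k m : ℤ) := by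
      rw [hsplitE, hS1] at hcastEDa
      rw [hsplit2] at hcastEa
      omega
    exact_mod_cast this

end AuxComb
section AuxIntv

open Finset

lemma emod_succ_inj (N x y : ℤ) (hN : 1 ≤ N) (hx0 : 0 ≤ x) (hxN : x < N)
    (hy0 : 0 ≤ y) (hyN : y < N) (h : (x+1) % N = (y+1) % N) : x = y := by
  have e1 : (x+1) % N = if x+1 = N then 0 else x+1 := by
    split_ifs with h1
    · rw [h1, Int.emod_self]
    · exact Int.emod_eq_of_lt (by omega) (by omega)
  have e2 : (y+1) % N = if y+1 = N then 0 else y+1 := by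
    split_ifs with h1
    · rw [h1, Int.emod_self]
    · exact Int.emod_eq_of_lt (by omega) (by omega)
  rw [e1, e2] at h
  split_ifs at h <;> omega

lemma cyc_cast (n i : ℕ) : ((cyc n i : ℕ) : ℤ) = ((i : ℤ) + 1) % (n : ℤ) := by
  unfold cyc
  push_cast
  rfl

lemma mod_succ_iff (n : ℕ) (hn : 2 ≤ n) (i : ℕ) (hi : i < n) (c : ℤ) :
    c % (n : ℤ) = (i : ℤ) ↔ (c + 1) % (n : ℤ) = ((cyc n i : ℕ) : ℤ) := by
  have hn0 : (0:ℤ) < (n:ℤ) := by exact_mod_cast (show 0 < n by omega)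
  have hi0 : (0:ℤ) ≤ (i:ℤ) := Int.natCast_nonneg i
  have hiN : (i:ℤ) < (n:ℤ) := by exact_mod_cast hi
  rw [cyc_cast]
  constructor
  · intro hc
    rw [Int.add_emod c 1, hc, Int.add_emod (i:ℤ) 1, Int.emod_eq_of_lt hi0 hiN]
  · intro hc
    have h1 : (c % n + 1) % (n:ℤ) = ((i:ℤ) + 1) % n := by
      rw [Int.add_emod (c % n) 1, Int.emod_emod_of_dvd c dvd_rfl, ← Int.add_emod]
      exact hc
    have h2 : 0 ≤ c % (n:ℤ) := Int.emod_nonneg c (by omega)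
    have h3 : c % (n:ℤ) < n := Int.emod_lt_of_pos c hn0
    exact emod_succ_inj (n:ℤ) (c % n) (i:ℤ) (by omega) h2 h3 hi0 hiN h1

lemma card_filter_insert (a : ℤ) (t : Finset ℤ) (ha : a ∉ t) (p : ℤ → Prop) [DecidablePred p] :
    ((insert a t).filter p).card = (t.filter p).card + (if p a then 1 else 0) := by
  rw [Finset.filter_insert]
  split_ifs with h
  · rw [Finset.card_insert_of_notMem (fun hmem => ha (Finset.mem_of_mem_filter a hmem))]
  · rw [add_zero]

lemma intv_step (n : ℕ) (hn : 2 ≤ n) (a b : ℤ) (hab : a ≤ b) (i : ℕ) (hi : i < n) :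
    intvCount n a b (cyc n i) ≤ intvCount n a b i + 1
      ∧ intvCount n a b i ≤ intvCount n a b (cyc n i) + 1 := by
  classical
  set p : ℤ → Prop := fun c => c % (n:ℤ) = ((cyc n i : ℕ) : ℤ) with hp
  -- `intvCount i` equals the count of `p` on the shifted interval
  have step1 : intvCount n a b i = ((Finset.Icc (a+1) (b+1)).filter p).card := by
    unfold intvCount
    apply Finset.card_nbij' (fun c => c + 1) (fun c => c - 1)
    · intro c hc
      simp only [Finset.mem_coe, Finset.mem_filter, Finset.mem_Icc] at hc ⊢
      refine ⟨by omega, ?_⟩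
      rw [hp]
      exact (mod_succ_iff n hn i hi c).1 hc.2
    · intro c hc
      simp only [Finset.mem_coe, Finset.mem_filter, Finset.mem_Icc, hp] at hc ⊢
      refine ⟨by omega, ?_⟩
      apply (mod_succ_iff n hn i hi (c-1)).2
      rw [sub_add_cancel]
      exact hc.2
    · intro c _; dsimp only; omega
    · intro c _; dsimp only; omega
  have hsplitL : Finset.Icc a b = insert a (Finset.Icc (a+1) b) := by
    ext c; simp only [Finset.mem_Icc, Finset.mem_insert]; omega
  have hsplitR : Finset.Icc (a+1) (b+1) = insert (b+1) (Finset.Icc (a+1) b) := by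
    ext c; simp only [Finset.mem_Icc, Finset.mem_insert]; omega
  have hL : intvCount n a b (cyc n i) = ((Finset.Icc (a+1) b).filter p).card
      + (if p a then 1 else 0) := by
    unfold intvCount
    rw [hsplitL]
    exact card_filter_insert a _ (by simp) p
  have hR : ((Finset.Icc (a+1) (b+1)).filter p).card = ((Finset.Icc (a+1) b).filter p).card
      + (if p (b+1) then 1 else 0) := by
    rw [hsplitR]
    exact card_filter_insert (b+1) _ (by simp) p
  rw [step1, hR]
  split_ifs at hL ⊢ <;> omega

lemma prod_sext (n : ℕ) (hn : 0 < n) (s : ℕ → ℂ) (a b : ℤ) :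
    ∏ c ∈ Finset.Icc a b, sext n s c = ∏ i ∈ range n, s i ^ intvCount n a b i := by
  classical
  have hmaps : ∀ c ∈ Finset.Icc a b, (c % (n:ℤ)).toNat ∈ range n := by
    intro c _
    have h2 : 0 ≤ c % (n:ℤ) := Int.emod_nonneg c (by positivity)
    have h3 : c % (n:ℤ) < n := Int.emod_lt_of_pos c (by exact_mod_cast hn)
    rw [mem_range]
    omega
  rw [← Finset.prod_fiberwise_of_maps_to hmaps (fun c => sext n s c)]
  apply Finset.prod_congr rfl
  intro i hi
  have hfib : (Finset.Icc a b).filter (fun c => (c % (n:ℤ)).toNat = i)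
      = (Finset.Icc a b).filter (fun c => c % (n:ℤ) = (i:ℤ)) := by
    apply Finset.filter_congr
    intro c _
    have h2 : 0 ≤ c % (n:ℤ) := Int.emod_nonneg c (by positivity)
    constructor
    · intro h; omega
    · intro h; omega
  rw [hfib]
  have hval : ∀ c ∈ (Finset.Icc a b).filter (fun c => c % (n:ℤ) = (i:ℤ)), sext n s c = s i := by
    intro c hc
    rw [Finset.mem_filter] at hc
    unfold sext
    rw [hc.2]
    simp
  rw [Finset.prod_congr rfl hval, Finset.prod_const]
  rfl

end AuxIntv
section AuxScale

open Finset Filter Topology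

lemma prod3_fin_to_range (n k : ℕ) (g : ℕ → ℕ → ℕ → ℂ) :
    (∏ i : Fin n, ∏ j : Fin k, ∏ j' : Fin k, g i.1 j.1 j'.1)
      = ∏ i ∈ range n, ∏ j ∈ range k, ∏ j' ∈ range k, g i j j' := by
  rw [Fin.prod_univ_eq_prod_range (fun i => ∏ j : Fin k, ∏ j' : Fin k, g i j.1 j'.1) n]
  refine Finset.prod_congr rfl fun i _ => ?_
  rw [Fin.prod_univ_eq_prod_range (fun j => ∏ j' : Fin k, g i j j'.1) k]
  exact Finset.prod_congr rfl fun j _ => Fin.prod_univ_eq_prod_range (fun j' => g i j j') k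

lemma scaleVar_app (n : ℕ) (m : ℕ → ℕ) (ξ : ℂ) (v : Va) (i j : ℕ) (hi : i < n) :
    scaleVar n m ξ v i j = ξ ^ (ala m i j) * v i j := by
  unfold scaleVar ala
  by_cases h : j < m i
  · simp [h, hi]
  · simp [h, hi]

lemma prod_scaleVar (n k : ℕ) (m : ℕ → ℕ) (ξ : ℂ) (v : Va) (i : ℕ) (hi : i < n)
    (hm : m i ≤ k) : (∏ j ∈ range k, scaleVar n m ξ v i j) = ξ ^ (m i) * XPa v k i := by
  unfold XPa
  rw [Finset.prod_congr rfl (fun j (_ : j ∈ range k) => scaleVar_app n m ξ v i j hi),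
    Finset.prod_mul_distrib, Finset.prod_pow_eq_pow_sum, sum_ala k m i hm]

lemma Fkmu_scaleVar_eq (n k : ℕ) (q μ : ℂ) (s : ℕ → ℂ) (v : Va) (m : ℕ → ℕ) (hn : 0 < n)
    (hm : ∀ i, i < n → m i ≤ k) (ξ : ℂ) :
    Fkmu n q s k μ (scaleVar n m ξ v) = NFgen n k q μ s v m idT ξ / DFgen n k v m idT ξ := by
  unfold Fkmu NFgen DFgen
  have convA : (∏ i ∈ range n, ∏ j ∈ range k, ∏ j' ∈ range k,
      if j = j' then (1:ℂ)
      else linF (idT (ala m i j, ala m i j')).1 (idT (ala m i j, ala m i j')).2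
        (v i j) ((q^2)⁻¹ * v i j') ξ)
      = ∏ i : Fin n, ∏ j : Fin k, ∏ j' : Fin k,
      if j = j' then (1:ℂ)
      else scaleVar n m ξ v i.1 j.1 - (q^2)⁻¹ * scaleVar n m ξ v i.1 j'.1 := by
    rw [← prod3_fin_to_range n k (fun a b c =>
      if b = c then (1:ℂ) else linF (idT (ala m a b, ala m a c)).1 (idT (ala m a b, ala m a c)).2
        (v a b) ((q^2)⁻¹ * v a c) ξ)]
    refine Finset.prod_congr rfl fun i _ => Finset.prod_congr rfl fun j _ =>
      Finset.prod_congr rfl fun j' _ => ?_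
    by_cases h : j = j'
    · rw [if_pos h, if_pos (by rw [h])]
    · rw [if_neg h, if_neg (fun hh => h (Fin.ext hh))]
      rw [scaleVar_app n m ξ v i.1 j.1 i.isLt, scaleVar_app n m ξ v i.1 j'.1 i.isLt]
      unfold linF idT
      ring
  have convB : (∏ i ∈ range n, linF (idT (m i, m (cyc n i))).1 (idT (m i, m (cyc n i))).2
      (SPa s i * XPa v k i) (μ * XPa v k (cyc n i)) ξ)
      = ∏ i : Fin n, ((∏ i' ∈ range (i.1 + 1), s i') * ∏ j : Fin k, scaleVar n m ξ v i.1 j.1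
        - μ * ∏ j : Fin k, scaleVar n m ξ v (cyc n i.1) j.1) := by
    rw [← Fin.prod_univ_eq_prod_range (fun i => linF (idT (m i, m (cyc n i))).1
      (idT (m i, m (cyc n i))).2 (SPa s i * XPa v k i) (μ * XPa v k (cyc n i)) ξ) n]
    refine Finset.prod_congr rfl fun i _ => ?_
    rw [Fin.prod_univ_eq_prod_range (fun j => scaleVar n m ξ v i.1 j) k,
      Fin.prod_univ_eq_prod_range (fun j => scaleVar n m ξ v (cyc n i.1) j) k,
      prod_scaleVar n k m ξ v i.1 i.isLt (hm i.1 i.isLt),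
      prod_scaleVar n k m ξ v (cyc n i.1) (cyc_lt n i.1 hn) (hm _ (cyc_lt n i.1 hn))]
    unfold linF idT SPa
    ring
  have convD : (∏ i ∈ range n, ∏ j ∈ range k, ∏ j' ∈ range k,
      linF (idT (ala m i j, ala m (cyc n i) j')).1 (idT (ala m i j, ala m (cyc n i) j')).2
        (v i j) (v (cyc n i) j') ξ)
      = ∏ i : Fin n, ∏ j : Fin k, ∏ j' : Fin k,
        (scaleVar n m ξ v i.1 j.1 - scaleVar n m ξ v (cyc n i.1) j'.1) := by
    rw [← prod3_fin_to_range n k (fun a b c =>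
      linF (idT (ala m a b, ala m (cyc n a) c)).1 (idT (ala m a b, ala m (cyc n a) c)).2
        (v a b) (v (cyc n a) c) ξ)]
    refine Finset.prod_congr rfl fun i _ => Finset.prod_congr rfl fun j _ =>
      Finset.prod_congr rfl fun j' _ => ?_
    rw [scaleVar_app n m ξ v i.1 j.1 i.isLt,
      scaleVar_app n m ξ v (cyc n i.1) j'.1 (cyc_lt n i.1 hn)]
    unfold linF idT
    ring
  rw [convA, convB, convD]

lemma DFgen_low_ne (n k : ℕ) (v : Va) (m : ℕ → ℕ) (hn : 2 ≤ n) (v_dom : v ∈ Dom n (fun _ => k)) :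
    DFgen n k v m lowT 0 ≠ 0 := by
  unfold DFgen
  rw [Finset.prod_ne_zero_iff]
  intro i hi
  rw [Finset.prod_ne_zero_iff]
  intro j hj
  rw [Finset.prod_ne_zero_iff]
  intro j' hj'
  have hi' : i < n := mem_range.1 hi
  have hci : cyc n i < n := cyc_lt n i (by omega)
  have hj2 : j < k := mem_range.1 hj
  have hj2' : j' < k := mem_range.1 hj'
  have hA : v i j ≠ 0 := v_dom.1 i hi' j hj2
  have hB : v (cyc n i) j' ≠ 0 := v_dom.1 (cyc n i) hci j' hj2'
  have hAB : v i j - v (cyc n i) j' ≠ 0 := by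
    refine sub_ne_zero_of_ne (v_dom.2 i (cyc n i) j j' hi' hci hj2 hj2' ?_)
    intro h
    exact (cyc_ne n i hn hi') (congrArg Prod.fst h).symm
  unfold linF lowT ala
  by_cases h1 : j < m i <;> by_cases h2 : j' < m (cyc n i) <;> simp [h1, h2] <;> simp_all

lemma DFgen_top_ne (n k : ℕ) (v : Va) (m : ℕ → ℕ) (hn : 2 ≤ n) (v_dom : v ∈ Dom n (fun _ => k)) :
    DFgen n k v m topT 0 ≠ 0 := by
  unfold DFgen
  rw [Finset.prod_ne_zero_iff]
  intro i hi
  rw [Finset.prod_ne_zero_iff]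
  intro j hj
  rw [Finset.prod_ne_zero_iff]
  intro j' hj'
  have hi' : i < n := mem_range.1 hi
  have hci : cyc n i < n := cyc_lt n i (by omega)
  have hj2 : j < k := mem_range.1 hj
  have hj2' : j' < k := mem_range.1 hj'
  have hA : v i j ≠ 0 := v_dom.1 i hi' j hj2
  have hB : v (cyc n i) j' ≠ 0 := v_dom.1 (cyc n i) hci j' hj2'
  have hAB : v i j - v (cyc n i) j' ≠ 0 := by
    refine sub_ne_zero_of_ne (v_dom.2 i (cyc n i) j j' hi' hci hj2 hj2' ?_)
    intro h
    exact (cyc_ne n i hn hi') (congrArg Prod.fst h).symm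
  unfold linF topT ala
  by_cases h1 : j < m i <;> by_cases h2 : j' < m (cyc n i) <;> simp [h1, h2] <;> simp_all

lemma tendsto_ratio_zero (n k : ℕ) (q μ : ℂ) (s : ℕ → ℂ) (v : Va) (m : ℕ → ℕ)
    (hexp : eNa n k m = eDa n k m) (hD : DFgen n k v m lowT 0 ≠ 0) :
    Tendsto (fun ξ => NFgen n k q μ s v m idT ξ / DFgen n k v m idT ξ) (𝓝[≠] (0:ℂ))
      (𝓝 (NFgen n k q μ s v m lowT 0 / DFgen n k v m lowT 0)) := by
  have hcont : Tendsto (fun ξ => NFgen n k q μ s v m lowT ξ / DFgen n k v m lowT ξ)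
      (𝓝[≠] (0:ℂ)) (𝓝 (NFgen n k q μ s v m lowT 0 / DFgen n k v m lowT 0)) := by
    apply tendsto_nhdsWithin_of_tendsto_nhds
    exact ((NFgen_cont n k q μ s v m lowT).tendsto 0).div ((DFgen_cont n k v m lowT).tendsto 0) hD
  apply hcont.congr'
  filter_upwards [self_mem_nhdsWithin] with ξ (hξ : ξ ≠ 0)
  rw [NFgen_low_decomp, DFgen_low_decomp, hexp, mul_div_mul_left _ _ (pow_ne_zero _ hξ)]

lemma tendsto_ratio_infty (n k : ℕ) (q μ : ℂ) (s : ℕ → ℂ) (v : Va) (m : ℕ → ℕ)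
    (hexp : ENa n k m = EDa n k m) (hD : DFgen n k v m topT 0 ≠ 0) :
    Tendsto (fun ξ => NFgen n k q μ s v m idT ξ / DFgen n k v m idT ξ) (Bornology.cobounded ℂ)
      (𝓝 (NFgen n k q μ s v m topT 0 / DFgen n k v m topT 0)) := by
  have hcont : Tendsto (fun η => NFgen n k q μ s v m topT η / DFgen n k v m topT η)
      (𝓝[≠] (0:ℂ)) (𝓝 (NFgen n k q μ s v m topT 0 / DFgen n k v m topT 0)) := by
    apply tendsto_nhdsWithin_of_tendsto_nhds
    exact ((NFgen_cont n k q μ s v m topT).tendsto 0).div ((DFgen_cont n k v m topT).tendsto 0) hD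
  have hne : ∀ᶠ ξ : ℂ in Bornology.cobounded ℂ, ξ ≠ 0 := by
    have h : Bornology.IsBounded ({0} : Set ℂ) := Bornology.isBounded_singleton
    filter_upwards [(h : ({0}ᶜ : Set ℂ) ∈ Bornology.cobounded ℂ)] with ξ hξ
    simpa using hξ
  have hinv : Tendsto (fun ξ : ℂ => ξ⁻¹) (Bornology.cobounded ℂ) (𝓝[≠] (0:ℂ)) := by
    rw [tendsto_nhdsWithin_iff]
    refine ⟨tendsto_inv₀_cobounded, ?_⟩
    filter_upwards [hne] with ξ hξ
    exact inv_ne_zero hξ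
  have hcomp := hcont.comp hinv
  apply hcomp.congr'
  filter_upwards [hne] with ξ hξ
  have hξi : ξ⁻¹ ≠ 0 := inv_ne_zero hξ
  have h1 := NFgen_top_decomp n k q μ s v m ξ⁻¹ hξi
  have h2 := DFgen_top_decomp n k v m ξ⁻¹ hξi
  rw [inv_inv] at h1 h2
  simp only [Function.comp_apply]
  rw [← h1, ← h2, hexp, mul_div_mul_left _ _ (pow_ne_zero _ hξi)]

end AuxScale
section AuxVal

open Finset

lemma XPa_split (v : Va) (k : ℕ) (m : ℕ → ℕ) (i : ℕ) (hm : m i ≤ k) :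
    XPa v k i = PPa v m i * QPa v k m i := by
  unfold XPa PPa QPa
  rw [range_eq_Ico, ← Finset.prod_Ico_consecutive _ (Nat.zero_le (m i)) hm, ← range_eq_Ico]

lemma mixed_prod_top (k mi mi' : ℕ) (hmi : mi ≤ k) (hmi' : mi' ≤ k) (f g : ℕ → ℂ) :
    (∏ j ∈ range k, ∏ j' ∈ range k,
      if j < mi ∧ ¬ j' < mi' then f j else if j' < mi' ∧ ¬ j < mi then g j' else 1)
    = (∏ j ∈ range mi, f j) ^ (k - mi') * (∏ j' ∈ range mi', g j') ^ (k - mi) := by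
  have inner1 : ∀ j, j < mi → (∏ j' ∈ range k,
      if j < mi ∧ ¬ j' < mi' then f j else if j' < mi' ∧ ¬ j < mi then g j' else 1)
      = f j ^ (k - mi') := by
    intro j hj
    have : ∀ j', (if j < mi ∧ ¬ j' < mi' then f j else if j' < mi' ∧ ¬ j < mi then g j' else 1)
        = (if j' < mi' then 1 else f j) := by
      intro j'
      by_cases h : j' < mi' <;> simp [h, hj]
    rw [Finset.prod_congr rfl fun j' _ => this j', prod_split k mi' hmi' (fun _ => 1) (fun _ => f j),
      Finset.prod_const_one, one_mul, Finset.prod_const, Nat.card_Ico]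
  have inner2 : ∀ j, ¬ j < mi → (∏ j' ∈ range k,
      if j < mi ∧ ¬ j' < mi' then f j else if j' < mi' ∧ ¬ j < mi then g j' else 1)
      = ∏ j' ∈ range mi', g j' := by
    intro j hj
    have : ∀ j', (if j < mi ∧ ¬ j' < mi' then f j else if j' < mi' ∧ ¬ j < mi then g j' else 1)
        = (if j' < mi' then g j' else 1) := by
      intro j'
      by_cases h : j' < mi' <;> simp [h, hj]
    rw [Finset.prod_congr rfl fun j' _ => this j', prod_split k mi' hmi' g (fun _ => 1),
      Finset.prod_const_one, mul_one]
  have houter : ∀ j, (∏ j' ∈ range k,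
      if j < mi ∧ ¬ j' < mi' then f j else if j' < mi' ∧ ¬ j < mi then g j' else 1)
      = (if j < mi then f j ^ (k - mi') else ∏ j' ∈ range mi', g j') := by
    intro j
    by_cases h : j < mi
    · rw [if_pos h]; exact inner1 j h
    · rw [if_neg h]; exact inner2 j h
  rw [Finset.prod_congr rfl fun j _ => houter j,
    prod_split k mi hmi (fun j => f j ^ (k - mi')) (fun _ => ∏ j' ∈ range mi', g j'),
    ← Finset.prod_pow, Finset.prod_const, Nat.card_Ico]

lemma mixed_prod_low (k mi mi' : ℕ) (hmi : mi ≤ k) (hmi' : mi' ≤ k) (F G : ℕ → ℂ) :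
    (∏ j ∈ range k, ∏ j' ∈ range k,
      if j < mi ∧ ¬ j' < mi' then F j' else if j' < mi' ∧ ¬ j < mi then G j else 1)
    = (∏ j' ∈ Finset.Ico mi' k, F j') ^ mi * (∏ j ∈ Finset.Ico mi k, G j) ^ mi' := by
  have inner1 : ∀ j, j < mi → (∏ j' ∈ range k,
      if j < mi ∧ ¬ j' < mi' then F j' else if j' < mi' ∧ ¬ j < mi then G j else 1)
      = ∏ j' ∈ Finset.Ico mi' k, F j' := by
    intro j hj
    have : ∀ j', (if j < mi ∧ ¬ j' < mi' then F j' else if j' < mi' ∧ ¬ j < mi then G j else 1)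
        = (if j' < mi' then 1 else F j') := by
      intro j'
      by_cases h : j' < mi' <;> simp [h, hj]
    rw [Finset.prod_congr rfl fun j' _ => this j', prod_split k mi' hmi' (fun _ => 1) F,
      Finset.prod_const_one, one_mul]
  have inner2 : ∀ j, ¬ j < mi → (∏ j' ∈ range k,
      if j < mi ∧ ¬ j' < mi' then F j' else if j' < mi' ∧ ¬ j < mi then G j else 1)
      = G j ^ mi' := by
    intro j hj
    have : ∀ j', (if j < mi ∧ ¬ j' < mi' then F j' else if j' < mi' ∧ ¬ j < mi then G j else 1)
        = (if j' < mi' then G j else 1) := by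
      intro j'
      by_cases h : j' < mi' <;> simp [h, hj]
    rw [Finset.prod_congr rfl fun j' _ => this j', prod_split k mi' hmi' (fun _ => G j) (fun _ => 1),
      Finset.prod_const_one, mul_one, Finset.prod_const, Finset.card_range]
  have houter : ∀ j, (∏ j' ∈ range k,
      if j < mi ∧ ¬ j' < mi' then F j' else if j' < mi' ∧ ¬ j < mi then G j else 1)
      = (if j < mi then ∏ j' ∈ Finset.Ico mi' k, F j' else G j ^ mi') := by
    intro j
    by_cases h : j < mi
    · rw [if_pos h]; exact inner1 j h
    · rw [if_neg h]; exact inner2 j h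
  rw [Finset.prod_congr rfl fun j _ => houter j,
    prod_split k mi hmi (fun _ => ∏ j' ∈ Finset.Ico mi' k, F j') (fun j => G j ^ mi'),
    Finset.prod_const, Finset.card_range]
  congr 1
  exact Finset.prod_pow _ _ G

/-- common part of the numerator -/
def CNa (n k : ℕ) (q μ : ℂ) (s : ℕ → ℂ) (v : Va) (m : ℕ → ℕ) : ℂ :=
  (∏ i ∈ range n, ∏ j ∈ range k, ∏ j' ∈ range k,
    if j = j' then 1 else if ((j < m i) ↔ (j' < m i)) then v i j - (q^2)⁻¹ * v i j' else 1) *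
  ∏ i ∈ range n, (if m i = m (cyc n i)
    then SPa s i * XPa v k i - μ * XPa v k (cyc n i) else 1)

/-- common part of the denominator -/
def CDa (n k : ℕ) (v : Va) (m : ℕ → ℕ) : ℂ :=
  ∏ i ∈ range n, ∏ j ∈ range k, ∏ j' ∈ range k,
    if ((j < m i) ↔ (j' < m (cyc n i))) then v i j - v (cyc n i) j' else 1

lemma splitA (i j j' mi : ℕ) (A B : ℂ) (z : ℂ → ℂ → ℂ) : True := trivial

lemma splitA_top (mi : ℕ) (j j' : ℕ) (A B : ℂ) (hmi : True) :
    (if j = j' then 1 else linF (topT (if j < mi then 1 else 0, if j' < mi then 1 else 0)).1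
      (topT (if j < mi then 1 else 0, if j' < mi then 1 else 0)).2 A B 0)
    = (if j = j' then 1 else if ((j < mi) ↔ (j' < mi)) then A - B else 1)
      * (if j < mi ∧ ¬ j' < mi then A else if j' < mi ∧ ¬ j < mi then (-1 : ℂ) * B else 1) := by
  unfold topT linF
  by_cases h : j = j' <;> by_cases h1 : j < mi <;> by_cases h2 : j' < mi <;>
    simp [h, h1, h2] <;> ring

lemma splitA_low (mi : ℕ) (j j' : ℕ) (A B : ℂ) :
    (if j = j' then 1 else linF (lowT (if j < mi then 1 else 0, if j' < mi then 1 else 0)).1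
      (lowT (if j < mi then 1 else 0, if j' < mi then 1 else 0)).2 A B 0)
    = (if j = j' then 1 else if ((j < mi) ↔ (j' < mi)) then A - B else 1)
      * (if j < mi ∧ ¬ j' < mi then (-1 : ℂ) * B else if j' < mi ∧ ¬ j < mi then A else 1) := by
  unfold lowT linF
  by_cases h : j = j' <;> by_cases h1 : j < mi <;> by_cases h2 : j' < mi <;>
    simp [h, h1, h2] <;> ring

lemma splitD_top (mi mi' : ℕ) (j j' : ℕ) (A B : ℂ) :
    linF (topT (if j < mi then 1 else 0, if j' < mi' then 1 else 0)).1
      (topT (if j < mi then 1 else 0, if j' < mi' then 1 else 0)).2 A B 0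
    = (if ((j < mi) ↔ (j' < mi')) then A - B else 1)
      * (if j < mi ∧ ¬ j' < mi' then A else if j' < mi' ∧ ¬ j < mi then (-1 : ℂ) * B else 1) := by
  unfold topT linF
  by_cases h1 : j < mi <;> by_cases h2 : j' < mi' <;> simp [h1, h2] <;> ring

lemma splitD_low (mi mi' : ℕ) (j j' : ℕ) (A B : ℂ) :
    linF (lowT (if j < mi then 1 else 0, if j' < mi' then 1 else 0)).1
      (lowT (if j < mi then 1 else 0, if j' < mi' then 1 else 0)).2 A B 0
    = (if ((j < mi) ↔ (j' < mi')) then A - B else 1)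
      * (if j < mi ∧ ¬ j' < mi' then (-1 : ℂ) * B else if j' < mi' ∧ ¬ j < mi then A else 1) := by
  unfold lowT linF
  by_cases h1 : j < mi <;> by_cases h2 : j' < mi' <;> simp [h1, h2] <;> ring

lemma splitB_top (mi mi' : ℕ) (A B : ℂ) :
    linF (topT (mi, mi')).1 (topT (mi, mi')).2 A B 0
    = (if mi = mi' then A - B else 1)
      * (if mi < mi' then (-1 : ℂ) * B else if mi' < mi then A else 1) := by
  have e1 : (topT (mi, mi')).1 = max mi mi' - mi := rfl
  have e2 : (topT (mi, mi')).2 = max mi mi' - mi' := rfl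
  rw [e1, e2]
  unfold linF
  rcases lt_trichotomy mi mi' with h | h | h
  · rw [if_neg (by omega), if_pos h, show max mi mi' - mi' = 0 by omega, pow_zero,
      zero_pow (show max mi mi' - mi ≠ 0 by omega)]
    ring
  · rw [if_pos h, if_neg (by omega), if_neg (by omega), show max mi mi' - mi = 0 by omega,
      show max mi mi' - mi' = 0 by omega, pow_zero]
    ring
  · rw [if_neg (by omega), if_neg (by omega), if_pos h, show max mi mi' - mi = 0 by omega,
      pow_zero, zero_pow (show max mi mi' - mi' ≠ 0 by omega)]
    ring

lemma splitB_low (mi mi' : ℕ) (A B : ℂ) :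
    linF (lowT (mi, mi')).1 (lowT (mi, mi')).2 A B 0
    = (if mi = mi' then A - B else 1)
      * (if mi' < mi then (-1 : ℂ) * B else if mi < mi' then A else 1) := by
  have e1 : (lowT (mi, mi')).1 = mi - min mi mi' := rfl
  have e2 : (lowT (mi, mi')).2 = mi' - min mi mi' := rfl
  rw [e1, e2]
  unfold linF
  rcases lt_trichotomy mi mi' with h | h | h
  · rw [if_neg (by omega), if_neg (by omega), if_pos h, show mi - min mi mi' = 0 by omega,
      pow_zero, zero_pow (show mi' - min mi mi' ≠ 0 by omega)]
    ring
  · rw [if_pos h, if_neg (by omega), if_neg (by omega), show mi - min mi mi' = 0 by omega,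
      show mi' - min mi mi' = 0 by omega, pow_zero]
    ring
  · rw [if_neg (by omega), if_pos h, show mi' - min mi mi' = 0 by omega,
      pow_zero, zero_pow (show mi - min mi mi' ≠ 0 by omega)]
    ring

end AuxVal
section AuxVal2

open Finset

lemma prod2_mul (k : ℕ) (F G : ℕ → ℕ → ℂ) :
    (∏ j ∈ range k, ∏ j' ∈ range k, (F j j' * G j j'))
      = (∏ j ∈ range k, ∏ j' ∈ range k, F j j') * (∏ j ∈ range k, ∏ j' ∈ range k, G j j') := by
  rw [← Finset.prod_mul_distrib]
  exact Finset.prod_congr rfl fun j _ => Finset.prod_mul_distrib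

/-- canonical mixed parts -/
def MAtop (k : ℕ) (q : ℂ) (v : Va) (m : ℕ → ℕ) (i : ℕ) : ℂ :=
  ((-1:ℂ) * (q^2)⁻¹) ^ (m i * (k - m i)) * (PPa v m i ^ (k - m i) * PPa v m i ^ (k - m i))
def MAlow (k : ℕ) (q : ℂ) (v : Va) (m : ℕ → ℕ) (i : ℕ) : ℂ :=
  ((-1:ℂ) * (q^2)⁻¹) ^ ((k - m i) * m i) * (QPa v k m i ^ (m i) * QPa v k m i ^ (m i))
def MBtop (n k : ℕ) (μ : ℂ) (s : ℕ → ℂ) (v : Va) (m : ℕ → ℕ) (i : ℕ) : ℂ :=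
  if m i < m (cyc n i) then (-1:ℂ) * (μ * XPa v k (cyc n i))
  else if m (cyc n i) < m i then SPa s i * XPa v k i else 1
def MBlow (n k : ℕ) (μ : ℂ) (s : ℕ → ℂ) (v : Va) (m : ℕ → ℕ) (i : ℕ) : ℂ :=
  if m (cyc n i) < m i then (-1:ℂ) * (μ * XPa v k (cyc n i))
  else if m i < m (cyc n i) then SPa s i * XPa v k i else 1
def MDtop (n k : ℕ) (v : Va) (m : ℕ → ℕ) (i : ℕ) : ℂ :=
  (-1:ℂ) ^ (m (cyc n i) * (k - m i))
    * (PPa v m i ^ (k - m (cyc n i)) * PPa v m (cyc n i) ^ (k - m i))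
def MDlow (n k : ℕ) (v : Va) (m : ℕ → ℕ) (i : ℕ) : ℂ :=
  (-1:ℂ) ^ ((k - m (cyc n i)) * m i)
    * (QPa v k m (cyc n i) ^ (m i) * QPa v k m i ^ (m (cyc n i)))

lemma NF_top_val (n k : ℕ) (q μ : ℂ) (s : ℕ → ℂ) (v : Va) (m : ℕ → ℕ) (hn : 0 < n)
    (hm : ∀ i, i < n → m i ≤ k) :
    NFgen n k q μ s v m topT 0 = CNa n k q μ s v m
      * ((∏ i ∈ range n, MAtop k q v m i) * ∏ i ∈ range n, MBtop n k μ s v m i) := by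
  unfold NFgen CNa
  have hA : (∏ i ∈ range n, ∏ j ∈ range k, ∏ j' ∈ range k,
      if j = j' then 1
      else linF (topT (ala m i j, ala m i j')).1 (topT (ala m i j, ala m i j')).2
        (v i j) ((q^2)⁻¹ * v i j') 0)
      = (∏ i ∈ range n, ∏ j ∈ range k, ∏ j' ∈ range k,
        if j = j' then 1 else if ((j < m i) ↔ (j' < m i)) then v i j - (q^2)⁻¹ * v i j' else 1)
        * ∏ i ∈ range n, MAtop k q v m i := by
    rw [← Finset.prod_mul_distrib]
    apply Finset.prod_congr rfl
    intro i hi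
    have hmi : m i ≤ k := hm i (mem_range.1 hi)
    have step1 : (∏ j ∈ range k, ∏ j' ∈ range k,
        if j = j' then 1
        else linF (topT (ala m i j, ala m i j')).1 (topT (ala m i j, ala m i j')).2
          (v i j) ((q^2)⁻¹ * v i j') 0)
        = ∏ j ∈ range k, ∏ j' ∈ range k,
          ((if j = j' then 1 else if ((j < m i) ↔ (j' < m i)) then v i j - (q^2)⁻¹ * v i j' else 1)
          * (if j < m i ∧ ¬ j' < m i then v i j
             else if j' < m i ∧ ¬ j < m i then (-1:ℂ) * ((q^2)⁻¹ * v i j') else 1)) := by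
      refine Finset.prod_congr rfl fun j _ => Finset.prod_congr rfl fun j' _ => ?_
      have := splitA_top (m i) j j' (v i j) ((q^2)⁻¹ * v i j') trivial
      unfold ala
      exact this
    rw [step1, prod2_mul]
    congr 1
    rw [mixed_prod_top k (m i) (m i) hmi hmi (fun j => v i j)
      (fun j' => (-1:ℂ) * ((q^2)⁻¹ * v i j'))]
    have hg : (∏ j' ∈ range (m i), (-1:ℂ) * ((q^2)⁻¹ * v i j'))
        = ((-1:ℂ) * (q^2)⁻¹) ^ (m i) * PPa v m i := by
      unfold PPa
      rw [Finset.prod_congr rfl (fun j' (_ : j' ∈ range (m i)) =>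
        (mul_assoc (-1:ℂ) ((q^2)⁻¹) (v i j')).symm), prod_const_mul_fun, Finset.card_range]
    rw [hg, mul_pow, ← pow_mul]
    unfold MAtop PPa
    ring
  have hB : (∏ i ∈ range n, linF (topT (m i, m (cyc n i))).1 (topT (m i, m (cyc n i))).2
      (SPa s i * XPa v k i) (μ * XPa v k (cyc n i)) 0)
      = (∏ i ∈ range n, (if m i = m (cyc n i)
          then SPa s i * XPa v k i - μ * XPa v k (cyc n i) else 1))
        * ∏ i ∈ range n, MBtop n k μ s v m i := by
    rw [← Finset.prod_mul_distrib]
    exact Finset.prod_congr rfl fun i _ =>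
      splitB_top (m i) (m (cyc n i)) (SPa s i * XPa v k i) (μ * XPa v k (cyc n i))
  rw [hA, hB]
  ring

lemma NF_low_val (n k : ℕ) (q μ : ℂ) (s : ℕ → ℂ) (v : Va) (m : ℕ → ℕ) (hn : 0 < n)
    (hm : ∀ i, i < n → m i ≤ k) :
    NFgen n k q μ s v m lowT 0 = CNa n k q μ s v m
      * ((∏ i ∈ range n, MAlow k q v m i) * ∏ i ∈ range n, MBlow n k μ s v m i) := by
  unfold NFgen CNa
  have hA : (∏ i ∈ range n, ∏ j ∈ range k, ∏ j' ∈ range k,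
      if j = j' then 1
      else linF (lowT (ala m i j, ala m i j')).1 (lowT (ala m i j, ala m i j')).2
        (v i j) ((q^2)⁻¹ * v i j') 0)
      = (∏ i ∈ range n, ∏ j ∈ range k, ∏ j' ∈ range k,
        if j = j' then 1 else if ((j < m i) ↔ (j' < m i)) then v i j - (q^2)⁻¹ * v i j' else 1)
        * ∏ i ∈ range n, MAlow k q v m i := by
    rw [← Finset.prod_mul_distrib]
    apply Finset.prod_congr rfl
    intro i hi
    have hmi : m i ≤ k := hm i (mem_range.1 hi)
    have step1 : (∏ j ∈ range k, ∏ j' ∈ range k,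
        if j = j' then 1
        else linF (lowT (ala m i j, ala m i j')).1 (lowT (ala m i j, ala m i j')).2
          (v i j) ((q^2)⁻¹ * v i j') 0)
        = ∏ j ∈ range k, ∏ j' ∈ range k,
          ((if j = j' then 1 else if ((j < m i) ↔ (j' < m i)) then v i j - (q^2)⁻¹ * v i j' else 1)
          * (if j < m i ∧ ¬ j' < m i then (-1:ℂ) * ((q^2)⁻¹ * v i j')
             else if j' < m i ∧ ¬ j < m i then v i j else 1)) := by
      refine Finset.prod_congr rfl fun j _ => Finset.prod_congr rfl fun j' _ => ?_
      have := splitA_low (m i) j j' (v i j) ((q^2)⁻¹ * v i j')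
      unfold ala
      exact this
    rw [step1, prod2_mul]
    congr 1
    rw [mixed_prod_low k (m i) (m i) hmi hmi (fun j' => (-1:ℂ) * ((q^2)⁻¹ * v i j'))
      (fun j => v i j)]
    have hg : (∏ j' ∈ Finset.Ico (m i) k, (-1:ℂ) * ((q^2)⁻¹ * v i j'))
        = ((-1:ℂ) * (q^2)⁻¹) ^ (k - m i) * QPa v k m i := by
      unfold QPa
      rw [Finset.prod_congr rfl (fun j' (_ : j' ∈ Finset.Ico (m i) k) =>
        (mul_assoc (-1:ℂ) ((q^2)⁻¹) (v i j')).symm), prod_const_mul_fun, Nat.card_Ico]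
    rw [hg, mul_pow, ← pow_mul]
    unfold MAlow QPa
    ring
  have hB : (∏ i ∈ range n, linF (lowT (m i, m (cyc n i))).1 (lowT (m i, m (cyc n i))).2
      (SPa s i * XPa v k i) (μ * XPa v k (cyc n i)) 0)
      = (∏ i ∈ range n, (if m i = m (cyc n i)
          then SPa s i * XPa v k i - μ * XPa v k (cyc n i) else 1))
        * ∏ i ∈ range n, MBlow n k μ s v m i := by
    rw [← Finset.prod_mul_distrib]
    exact Finset.prod_congr rfl fun i _ =>
      splitB_low (m i) (m (cyc n i)) (SPa s i * XPa v k i) (μ * XPa v k (cyc n i))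
  rw [hA, hB]
  ring

lemma DF_top_val (n k : ℕ) (v : Va) (m : ℕ → ℕ) (hn : 0 < n)
    (hm : ∀ i, i < n → m i ≤ k) :
    DFgen n k v m topT 0 = CDa n k v m * ∏ i ∈ range n, MDtop n k v m i := by
  unfold DFgen CDa
  rw [← Finset.prod_mul_distrib]
  apply Finset.prod_congr rfl
  intro i hi
  have hmi : m i ≤ k := hm i (mem_range.1 hi)
  have hmi' : m (cyc n i) ≤ k := hm _ (cyc_lt n i hn)
  have step1 : (∏ j ∈ range k, ∏ j' ∈ range k,
      linF (topT (ala m i j, ala m (cyc n i) j')).1 (topT (ala m i j, ala m (cyc n i) j')).2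
        (v i j) (v (cyc n i) j') 0)
      = ∏ j ∈ range k, ∏ j' ∈ range k,
        ((if ((j < m i) ↔ (j' < m (cyc n i))) then v i j - v (cyc n i) j' else 1)
        * (if j < m i ∧ ¬ j' < m (cyc n i) then v i j
           else if j' < m (cyc n i) ∧ ¬ j < m i then (-1:ℂ) * v (cyc n i) j' else 1)) := by
    refine Finset.prod_congr rfl fun j _ => Finset.prod_congr rfl fun j' _ => ?_
    have := splitD_top (m i) (m (cyc n i)) j j' (v i j) (v (cyc n i) j')
    unfold ala
    exact this
  rw [step1, prod2_mul]
  congr 1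
  rw [mixed_prod_top k (m i) (m (cyc n i)) hmi hmi' (fun j => v i j)
    (fun j' => (-1:ℂ) * v (cyc n i) j')]
  have hg : (∏ j' ∈ range (m (cyc n i)), (-1:ℂ) * v (cyc n i) j')
      = (-1:ℂ) ^ (m (cyc n i)) * PPa v m (cyc n i) := by
    unfold PPa
    rw [prod_const_mul_fun, Finset.card_range]
  rw [hg, mul_pow, ← pow_mul]
  unfold MDtop PPa
  ring

lemma DF_low_val (n k : ℕ) (v : Va) (m : ℕ → ℕ) (hn : 0 < n)
    (hm : ∀ i, i < n → m i ≤ k) :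
    DFgen n k v m lowT 0 = CDa n k v m * ∏ i ∈ range n, MDlow n k v m i := by
  unfold DFgen CDa
  rw [← Finset.prod_mul_distrib]
  apply Finset.prod_congr rfl
  intro i hi
  have hmi : m i ≤ k := hm i (mem_range.1 hi)
  have hmi' : m (cyc n i) ≤ k := hm _ (cyc_lt n i hn)
  have step1 : (∏ j ∈ range k, ∏ j' ∈ range k,
      linF (lowT (ala m i j, ala m (cyc n i) j')).1 (lowT (ala m i j, ala m (cyc n i) j')).2
        (v i j) (v (cyc n i) j') 0)
      = ∏ j ∈ range k, ∏ j' ∈ range k,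
        ((if ((j < m i) ↔ (j' < m (cyc n i))) then v i j - v (cyc n i) j' else 1)
        * (if j < m i ∧ ¬ j' < m (cyc n i) then (-1:ℂ) * v (cyc n i) j'
           else if j' < m (cyc n i) ∧ ¬ j < m i then v i j else 1)) := by
    refine Finset.prod_congr rfl fun j _ => Finset.prod_congr rfl fun j' _ => ?_
    have := splitD_low (m i) (m (cyc n i)) j j' (v i j) (v (cyc n i) j')
    unfold ala
    exact this
  rw [step1, prod2_mul]
  congr 1
  rw [mixed_prod_low k (m i) (m (cyc n i)) hmi hmi' (fun j' => (-1:ℂ) * v (cyc n i) j')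
    (fun j => v i j)]
  have hg : (∏ j' ∈ Finset.Ico (m (cyc n i)) k, (-1:ℂ) * v (cyc n i) j')
      = (-1:ℂ) ^ (k - m (cyc n i)) * QPa v k m (cyc n i) := by
    unfold QPa
    rw [prod_const_mul_fun, Nat.card_Ico]
  rw [hg, mul_pow, ← pow_mul]
  unfold MDlow QPa
  ring

end AuxVal2
section AuxScalar

open Finset

lemma prod_ite_const (n : ℕ) (p : ℕ → Prop) [DecidablePred p] (c : ℂ) :
    ∏ i ∈ range n, (if p i then c else 1) = c ^ ((range n).filter p).card := by
  rw [Finset.prod_ite, Finset.prod_const, Finset.prod_const_one, mul_one]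

lemma count_eq (n k : ℕ) (m : ℕ → ℕ)
    (hstep : ∀ i, i < n → m (cyc n i) ≤ m i + 1 ∧ m i ≤ m (cyc n i) + 1) :
    ((range n).filter (fun i => m i < m (cyc n i))).card
      = ((range n).filter (fun i => m (cyc n i) < m i)).card := by
  have h1 : (((range n).filter (fun i => m i < m (cyc n i))).card : ℤ)
      = ∑ i ∈ range n, (if m i < m (cyc n i) then (1:ℤ) else 0) := by
    rw [Finset.card_filter]
    push_cast
    rfl
  have h2 : (((range n).filter (fun i => m (cyc n i) < m i)).card : ℤ)
      = ∑ i ∈ range n, (if m (cyc n i) < m i then (1:ℤ) else 0) := by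
    rw [Finset.card_filter]
    push_cast
    rfl
  have h0 : ∑ i ∈ range n, ((m (cyc n i) : ℤ) - (m i : ℤ)) = 0 := by
    rw [Finset.sum_sub_distrib, sum_cyc n (fun i => (m i : ℤ)), sub_self]
  have h3 : ∀ i ∈ range n, (m (cyc n i) : ℤ) - (m i : ℤ)
      = (if m i < m (cyc n i) then (1:ℤ) else 0) - (if m (cyc n i) < m i then (1:ℤ) else 0) := by
    intro i hi
    have := hstep i (mem_range.1 hi)
    split_ifs <;> omega
  rw [Finset.sum_congr rfl h3, Finset.sum_sub_distrib] at h0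
  have : (((range n).filter (fun i => m i < m (cyc n i))).card : ℤ)
      = (((range n).filter (fun i => m (cyc n i) < m i)).card : ℤ) := by
    rw [h1, h2]; omega
  exact_mod_cast this

lemma sum_sign_eq (n k : ℕ) (m : ℕ → ℕ) (hn : 0 < n) (hm : ∀ i, i < n → m i ≤ k) :
    ∑ i ∈ range n, m (cyc n i) * (k - m i) = ∑ i ∈ range n, (k - m (cyc n i)) * m i := by
  have hm' : ∀ i ∈ range n, m (cyc n i) ≤ k := fun i _ => hm _ (cyc_lt n i hn)
  have hm0 : ∀ i ∈ range n, m i ≤ k := fun i hi => hm i (mem_range.1 hi)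
  have key : ∀ i ∈ range n, ((m (cyc n i) * (k - m i) : ℕ) : ℤ)
      = (k:ℤ) * (m (cyc n i):ℤ) - (m (cyc n i):ℤ) * (m i : ℤ) := by
    intro i hi
    have h1 := hm0 i hi
    push_cast [Nat.cast_sub h1]
    ring
  have key2 : ∀ i ∈ range n, (((k - m (cyc n i)) * m i : ℕ) : ℤ)
      = (k:ℤ) * (m i:ℤ) - (m (cyc n i):ℤ) * (m i : ℤ) := by
    intro i hi
    have h1 := hm' i hi
    push_cast [Nat.cast_sub h1]
    ring
  have hcyc : ∑ i ∈ range n, ((k:ℤ) * (m (cyc n i):ℤ)) = ∑ i ∈ range n, ((k:ℤ) * (m i:ℤ)) :=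
    sum_cyc n (fun i => (k:ℤ) * (m i:ℤ))
  have hfin : ((∑ i ∈ range n, m (cyc n i) * (k - m i) : ℕ) : ℤ)
      = ((∑ i ∈ range n, (k - m (cyc n i)) * m i : ℕ) : ℤ) := by
    rw [Nat.cast_sum, Nat.cast_sum, Finset.sum_congr rfl key, Finset.sum_congr rfl key2,
      Finset.sum_sub_distrib, Finset.sum_sub_distrib, hcyc]
  exact_mod_cast hfin

lemma SPa_ne (n : ℕ) (s : ℕ → ℂ) (hs : ∀ i, i < n → s i ≠ 0) (i : ℕ) (hi : i < n) :
    SPa s i ≠ 0 := by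
  unfold SPa
  rw [Finset.prod_ne_zero_iff]
  intro r hr
  exact hs r (by have := mem_range.1 hr; omega)

lemma SPa_succ (n : ℕ) (hn : 0 < n) (s : ℕ → ℂ) (hprod : ∏ i ∈ range n, s i = 1)
    (i : ℕ) (hi : i < n) : SPa s i = s i * SPa s (cycP n i) := by
  rcases Nat.eq_zero_or_pos i with rfl | hpos
  · have hc : cycP n 0 = n - 1 := by
      unfold cycP
      rw [show 0 + n - 1 = n - 1 from by omega, Nat.mod_eq_of_lt (by omega)]
    rw [hc]
    unfold SPa
    rw [show n - 1 + 1 = n from by omega, hprod, mul_one]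
    simp
  · have hc : cycP n i = i - 1 := by
      unfold cycP
      rw [show i + n - 1 = (i - 1) + n by omega, Nat.add_mod_right, Nat.mod_eq_of_lt (by omega)]
    rw [hc]
    unfold SPa
    rw [show i - 1 + 1 = i by omega, ← Finset.prod_range_succ_comm]

lemma S_part (n : ℕ) (s : ℕ → ℂ) (m : ℕ → ℕ) (hn : 0 < n)
    (hs : ∀ i, i < n → s i ≠ 0) (hprod : ∏ i ∈ range n, s i = 1)
    (hstep : ∀ i, i < n → m (cyc n i) ≤ m i + 1 ∧ m i ≤ m (cyc n i) + 1) :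
    ∏ i ∈ range n, (if m (cyc n i) < m i then SPa s i else 1)
      = (∏ i ∈ range n, s i ^ m i) * ∏ i ∈ range n, (if m i < m (cyc n i) then SPa s i else 1) := by
  have hC : (∏ i ∈ range n, SPa s i ^ (m (cyc n i))) ≠ 0 := by
    rw [Finset.prod_ne_zero_iff]
    intro i hi
    exact pow_ne_zero _ (SPa_ne n s hs i (mem_range.1 hi))
  apply mul_right_cancel₀ hC
  have perI : ∀ i ∈ range n,
      (if m (cyc n i) < m i then SPa s i else 1) * SPa s i ^ (m (cyc n i))
      = s i ^ m i * ((if m i < m (cyc n i) then SPa s i else 1) * SPa s (cycP n i) ^ (m i)) := by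
    intro i hi
    have hi' := mem_range.1 hi
    have hsp := SPa_succ n hn s hprod i hi'
    have hst := hstep i hi'
    by_cases h1 : m (cyc n i) < m i
    · rw [if_pos h1, if_neg (by omega)]
      have h2 : m i = m (cyc n i) + 1 := by omega
      rw [hsp, h2, one_mul]
      rw [pow_succ, mul_pow]
      ring
    · by_cases h2 : m i < m (cyc n i)
      · rw [if_neg h1, if_pos h2]
        have h3 : m (cyc n i) = m i + 1 := by omega
        rw [hsp, h3, one_mul]
        rw [pow_succ, mul_pow]
        ring
      · rw [if_neg h1, if_neg h2]
        have h3 : m (cyc n i) = m i := by omega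
        rw [hsp, h3, one_mul, one_mul, mul_pow]
  calc (∏ i ∈ range n, (if m (cyc n i) < m i then SPa s i else 1))
        * ∏ i ∈ range n, SPa s i ^ (m (cyc n i))
      = ∏ i ∈ range n, ((if m (cyc n i) < m i then SPa s i else 1) * SPa s i ^ (m (cyc n i))) := by
        rw [Finset.prod_mul_distrib]
    _ = ∏ i ∈ range n, (s i ^ m i * ((if m i < m (cyc n i) then SPa s i else 1)
        * SPa s (cycP n i) ^ (m i))) := Finset.prod_congr rfl perI
    _ = (∏ i ∈ range n, s i ^ m i) * ((∏ i ∈ range n, (if m i < m (cyc n i) then SPa s i else 1))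
        * ∏ i ∈ range n, SPa s (cycP n i) ^ (m i)) := by
        rw [Finset.prod_mul_distrib, Finset.prod_mul_distrib]
    _ = (∏ i ∈ range n, s i ^ m i) * ((∏ i ∈ range n, (if m i < m (cyc n i) then SPa s i else 1))
        * ∏ i ∈ range n, SPa s i ^ (m (cyc n i))) := by
        congr 2
        calc ∏ i ∈ range n, SPa s (cycP n i) ^ (m i)
            = ∏ i ∈ range n, (fun t => SPa s (cycP n t) ^ (m t)) (cyc n i) := by
              rw [prod_cyc n (fun t => SPa s (cycP n t) ^ (m t))]
          _ = ∏ i ∈ range n, SPa s i ^ (m (cyc n i)) := by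
              apply Finset.prod_congr rfl
              intro i hi
              simp only
              rw [cycP_cyc n i hn (mem_range.1 hi)]
    _ = ((∏ i ∈ range n, s i ^ m i) * ∏ i ∈ range n, (if m i < m (cyc n i) then SPa s i else 1))
        * ∏ i ∈ range n, SPa s i ^ (m (cyc n i)) := by ring

lemma ite_split (c : Prop) [Decidable c] (x y : ℂ) :
    (if c then x * y else 1) = x ^ (if c then 1 else 0) * y ^ (if c then 1 else 0) := by
  by_cases h : c <;> simp [h]

lemma PQhelper (P Q : ℂ) (a b c d : ℕ) (h1 : a = c) (h2 : b = d) : P^a * Q^b = P^c * Q^d := by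
  rw [h1, h2]

/-- reindexing a cyclically-shifted conditional product -/
lemma reindex_shift (n : ℕ) (hn : 0 < n) (f : ℕ → ℕ → ℂ) :
    ∏ i ∈ range n, f i (cyc n i) = ∏ i ∈ range n, f (cycP n i) i := by
  calc ∏ i ∈ range n, f i (cyc n i)
      = ∏ i ∈ range n, (fun t => f (cycP n t) t) (cyc n i) := by
        apply Finset.prod_congr rfl
        intro i hi
        simp only
        rw [cycP_cyc n i hn (mem_range.1 hi)]
    _ = ∏ i ∈ range n, f (cycP n i) i := prod_cyc n (fun t => f (cycP n t) t)

end AuxScalar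
section AuxMaster

open Finset

lemma PQ_per_i (k : ℕ) (P Q : ℂ) (mm mp mq : ℕ)
    (hk1 : mm ≤ k) (hk2 : mp ≤ k) (hk3 : mq ≤ k)
    (h1 : mp ≤ mm + 1) (h2 : mm ≤ mp + 1) (h3 : mm ≤ mq + 1) (h4 : mq ≤ mm + 1) :
    (P ^ (k - mm) * P ^ (k - mm))
      * ((if mq < mm then P * Q else 1)
      * ((if mp < mm then P * Q else 1)
      * (Q ^ mq * Q ^ mp)))
    = (Q ^ mm * Q ^ mm)
      * ((if mm < mq then P * Q else 1)
      * ((if mm < mp then P * Q else 1)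
      * (P ^ (k - mp) * P ^ (k - mq)))) := by
  rw [ite_split (mq < mm) P Q, ite_split (mp < mm) P Q, ite_split (mm < mq) P Q,
    ite_split (mm < mp) P Q]
  have e1 : (P ^ (k - mm) * P ^ (k - mm))
      * ((P ^ (if mq < mm then 1 else 0) * Q ^ (if mq < mm then 1 else 0))
      * ((P ^ (if mp < mm then 1 else 0) * Q ^ (if mp < mm then 1 else 0))
      * (Q ^ mq * Q ^ mp)))
      = P ^ ((k - mm) + (k - mm) + ((if mq < mm then 1 else 0) + (if mp < mm then 1 else 0)))
        * Q ^ ((if mq < mm then 1 else 0) + (if mp < mm then 1 else 0) + (mq + mp)) := by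
    ring
  have e2 : (Q ^ mm * Q ^ mm)
      * ((P ^ (if mm < mq then 1 else 0) * Q ^ (if mm < mq then 1 else 0))
      * ((P ^ (if mm < mp then 1 else 0) * Q ^ (if mm < mp then 1 else 0))
      * (P ^ (k - mp) * P ^ (k - mq))))
      = P ^ ((if mm < mq then 1 else 0) + (if mm < mp then 1 else 0) + ((k - mp) + (k - mq)))
        * Q ^ (mm + mm + ((if mm < mq then 1 else 0) + (if mm < mp then 1 else 0))) := by
    ring
  rw [e1, e2]
  exact PQhelper P Q _ _ _ _ (by split_ifs <;> omega) (by split_ifs <;> omega)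

lemma PQ_part (n k : ℕ) (v : Va) (m : ℕ → ℕ) (hn : 0 < n)
    (hm : ∀ i, i < n → m i ≤ k)
    (hstep : ∀ i, i < n → m (cyc n i) ≤ m i + 1 ∧ m i ≤ m (cyc n i) + 1) :
    (∏ i ∈ range n, (PPa v m i ^ (k - m i) * PPa v m i ^ (k - m i)))
      * ((∏ i ∈ range n, (if m i < m (cyc n i) then XPa v k (cyc n i) else 1))
      * ((∏ i ∈ range n, (if m (cyc n i) < m i then XPa v k i else 1))
      * ((∏ i ∈ range n, QPa v k m (cyc n i) ^ (m i))
      * (∏ i ∈ range n, QPa v k m i ^ (m (cyc n i))))))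
    = (∏ i ∈ range n, (QPa v k m i ^ (m i) * QPa v k m i ^ (m i)))
      * ((∏ i ∈ range n, (if m (cyc n i) < m i then XPa v k (cyc n i) else 1))
      * ((∏ i ∈ range n, (if m i < m (cyc n i) then XPa v k i else 1))
      * ((∏ i ∈ range n, PPa v m i ^ (k - m (cyc n i)))
      * (∏ i ∈ range n, PPa v m (cyc n i) ^ (k - m i))))) := by
  have r1 : ∏ i ∈ range n, (if m i < m (cyc n i) then XPa v k (cyc n i) else 1)
      = ∏ i ∈ range n, (if m (cycP n i) < m i then XPa v k i else 1) :=
    reindex_shift n hn (fun a b => if m a < m b then XPa v k b else 1)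
  have r2 : ∏ i ∈ range n, (if m (cyc n i) < m i then XPa v k (cyc n i) else 1)
      = ∏ i ∈ range n, (if m i < m (cycP n i) then XPa v k i else 1) :=
    reindex_shift n hn (fun a b => if m b < m a then XPa v k b else 1)
  have r3 : ∏ i ∈ range n, QPa v k m (cyc n i) ^ (m i)
      = ∏ i ∈ range n, QPa v k m i ^ (m (cycP n i)) :=
    reindex_shift n hn (fun a b => QPa v k m b ^ (m a))
  have r4 : ∏ i ∈ range n, PPa v m (cyc n i) ^ (k - m i)
      = ∏ i ∈ range n, PPa v m i ^ (k - m (cycP n i)) :=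
    reindex_shift n hn (fun a b => PPa v m b ^ (k - m a))
  rw [r1, r2, r3, r4]
  -- now merge each side into a single product
  have mergeL : (∏ i ∈ range n, (PPa v m i ^ (k - m i) * PPa v m i ^ (k - m i)))
      * ((∏ i ∈ range n, (if m (cycP n i) < m i then XPa v k i else 1))
      * ((∏ i ∈ range n, (if m (cyc n i) < m i then XPa v k i else 1))
      * ((∏ i ∈ range n, QPa v k m i ^ (m (cycP n i)))
      * (∏ i ∈ range n, QPa v k m i ^ (m (cyc n i))))))
      = ∏ i ∈ range n, ((PPa v m i ^ (k - m i) * PPa v m i ^ (k - m i))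
      * ((if m (cycP n i) < m i then XPa v k i else 1)
      * ((if m (cyc n i) < m i then XPa v k i else 1)
      * (QPa v k m i ^ (m (cycP n i)) * QPa v k m i ^ (m (cyc n i)))))) := by
    simp only [Finset.prod_mul_distrib]
  have mergeR : (∏ i ∈ range n, (QPa v k m i ^ (m i) * QPa v k m i ^ (m i)))
      * ((∏ i ∈ range n, (if m i < m (cycP n i) then XPa v k i else 1))
      * ((∏ i ∈ range n, (if m i < m (cyc n i) then XPa v k i else 1))
      * ((∏ i ∈ range n, PPa v m i ^ (k - m (cyc n i)))
      * (∏ i ∈ range n, PPa v m i ^ (k - m (cycP n i))))))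
      = ∏ i ∈ range n, ((QPa v k m i ^ (m i) * QPa v k m i ^ (m i))
      * ((if m i < m (cycP n i) then XPa v k i else 1)
      * ((if m i < m (cyc n i) then XPa v k i else 1)
      * (PPa v m i ^ (k - m (cyc n i)) * PPa v m i ^ (k - m (cycP n i)))))) := by
    simp only [Finset.prod_mul_distrib]
  rw [mergeL, mergeR]
  apply Finset.prod_congr rfl
  intro i hi
  have hi' := mem_range.1 hi
  have hstep1 := hstep i hi'
  have hstep2 := hstep (cycP n i) (cycP_lt n i hn)
  rw [cyc_cycP n i hn hi'] at hstep2
  rw [XPa_split v k m i (hm i hi')]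
  exact PQ_per_i k (PPa v m i) (QPa v k m i) (m i) (m (cyc n i)) (m (cycP n i))
    (hm i hi') (hm _ (cyc_lt n i hn)) (hm _ (cycP_lt n i hn))
    hstep1.1 hstep1.2 hstep2.1 hstep2.2

lemma MBtop_split (n k : ℕ) (μ : ℂ) (s : ℕ → ℂ) (v : Va) (m : ℕ → ℕ) (i : ℕ) :
    MBtop n k μ s v m i
      = (if m i < m (cyc n i) then (-1:ℂ) * μ else 1)
      * ((if m i < m (cyc n i) then XPa v k (cyc n i) else 1)
      * ((if m (cyc n i) < m i then SPa s i else 1)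
      * (if m (cyc n i) < m i then XPa v k i else 1))) := by
  unfold MBtop
  rcases lt_trichotomy (m i) (m (cyc n i)) with h | h | h
  · rw [if_pos h, if_pos h, if_pos h, if_neg (by omega), if_neg (by omega)]
    ring
  · rw [h]
    simp
  · rw [if_neg (by omega), if_pos h, if_neg (by omega), if_neg (by omega), if_pos h, if_pos h]
    ring

lemma MBlow_split (n k : ℕ) (μ : ℂ) (s : ℕ → ℂ) (v : Va) (m : ℕ → ℕ) (i : ℕ) :
    MBlow n k μ s v m i
      = (if m (cyc n i) < m i then (-1:ℂ) * μ else 1)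
      * ((if m (cyc n i) < m i then XPa v k (cyc n i) else 1)
      * ((if m i < m (cyc n i) then SPa s i else 1)
      * (if m i < m (cyc n i) then XPa v k i else 1))) := by
  unfold MBlow
  rcases lt_trichotomy (m i) (m (cyc n i)) with h | h | h
  · rw [if_neg (by omega), if_pos h, if_neg (by omega), if_neg (by omega), if_pos h, if_pos h]
    ring
  · rw [h]
    simp
  · rw [if_pos h, if_pos h, if_pos h, if_neg (by omega), if_neg (by omega)]
    ring

lemma mix_identity (n k : ℕ) (q μ : ℂ) (s : ℕ → ℂ) (v : Va) (m : ℕ → ℕ) (hn : 0 < n)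
    (hm : ∀ i, i < n → m i ≤ k)
    (hstep : ∀ i, i < n → m (cyc n i) ≤ m i + 1 ∧ m i ≤ m (cyc n i) + 1)
    (hs : ∀ i, i < n → s i ≠ 0) (hprod : ∏ i ∈ range n, s i = 1) :
    (∏ i ∈ range n, MAtop k q v m i) * (∏ i ∈ range n, MBtop n k μ s v m i)
        * (∏ i ∈ range n, MDlow n k v m i)
      = (∏ i ∈ range n, s i ^ m i) * ((∏ i ∈ range n, MAlow k q v m i)
        * (∏ i ∈ range n, MBlow n k μ s v m i) * (∏ i ∈ range n, MDtop n k v m i)) := by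
  have hMA1 : ∏ i ∈ range n, MAtop k q v m i
      = ((-1:ℂ) * (q^2)⁻¹) ^ (∑ i ∈ range n, m i * (k - m i))
        * ∏ i ∈ range n, (PPa v m i ^ (k - m i) * PPa v m i ^ (k - m i)) := by
    unfold MAtop
    rw [Finset.prod_mul_distrib, Finset.prod_pow_eq_pow_sum]
  have hMA2 : ∏ i ∈ range n, MAlow k q v m i
      = ((-1:ℂ) * (q^2)⁻¹) ^ (∑ i ∈ range n, (k - m i) * m i)
        * ∏ i ∈ range n, (QPa v k m i ^ (m i) * QPa v k m i ^ (m i)) := by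
    unfold MAlow
    rw [Finset.prod_mul_distrib, Finset.prod_pow_eq_pow_sum]
  have hsum1 : ∑ i ∈ range n, m i * (k - m i) = ∑ i ∈ range n, (k - m i) * m i :=
    Finset.sum_congr rfl fun i _ => Nat.mul_comm _ _
  have hMB1 : ∏ i ∈ range n, MBtop n k μ s v m i
      = (∏ i ∈ range n, (if m i < m (cyc n i) then (-1:ℂ) * μ else 1))
      * ((∏ i ∈ range n, (if m i < m (cyc n i) then XPa v k (cyc n i) else 1))
      * ((∏ i ∈ range n, (if m (cyc n i) < m i then SPa s i else 1))
      * (∏ i ∈ range n, (if m (cyc n i) < m i then XPa v k i else 1)))) := by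
    rw [Finset.prod_congr rfl fun i (_ : i ∈ range n) => MBtop_split n k μ s v m i,
      Finset.prod_mul_distrib]
    congr 1
    rw [Finset.prod_mul_distrib]
    congr 1
    rw [Finset.prod_mul_distrib]
  have hMB2 : ∏ i ∈ range n, MBlow n k μ s v m i
      = (∏ i ∈ range n, (if m (cyc n i) < m i then (-1:ℂ) * μ else 1))
      * ((∏ i ∈ range n, (if m (cyc n i) < m i then XPa v k (cyc n i) else 1))
      * ((∏ i ∈ range n, (if m i < m (cyc n i) then SPa s i else 1))
      * (∏ i ∈ range n, (if m i < m (cyc n i) then XPa v k i else 1)))) := by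
    rw [Finset.prod_congr rfl fun i (_ : i ∈ range n) => MBlow_split n k μ s v m i,
      Finset.prod_mul_distrib]
    congr 1
    rw [Finset.prod_mul_distrib]
    congr 1
    rw [Finset.prod_mul_distrib]
  have hmu : (∏ i ∈ range n, (if m i < m (cyc n i) then (-1:ℂ) * μ else 1))
      = ∏ i ∈ range n, (if m (cyc n i) < m i then (-1:ℂ) * μ else 1) := by
    rw [prod_ite_const n (fun i => m i < m (cyc n i)) ((-1:ℂ) * μ),
      prod_ite_const n (fun i => m (cyc n i) < m i) ((-1:ℂ) * μ),
      count_eq n k m hstep]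
  have hMD1 : ∏ i ∈ range n, MDlow n k v m i
      = (-1:ℂ) ^ (∑ i ∈ range n, (k - m (cyc n i)) * m i)
      * ((∏ i ∈ range n, QPa v k m (cyc n i) ^ (m i))
      * (∏ i ∈ range n, QPa v k m i ^ (m (cyc n i)))) := by
    unfold MDlow
    rw [Finset.prod_mul_distrib, Finset.prod_pow_eq_pow_sum]
    congr 1
    rw [Finset.prod_mul_distrib]
  have hMD2 : ∏ i ∈ range n, MDtop n k v m i
      = (-1:ℂ) ^ (∑ i ∈ range n, m (cyc n i) * (k - m i))
      * ((∏ i ∈ range n, PPa v m i ^ (k - m (cyc n i)))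
      * (∏ i ∈ range n, PPa v m (cyc n i) ^ (k - m i))) := by
    unfold MDtop
    rw [Finset.prod_mul_distrib, Finset.prod_pow_eq_pow_sum]
    congr 1
    rw [Finset.prod_mul_distrib]
  have hsign := sum_sign_eq n k m hn hm
  have hS := S_part n s m hn hs hprod hstep
  have hPQ := PQ_part n k v m hn hm hstep
  rw [hMA1, hMA2, hMB1, hMB2, hMD1, hMD2, hsum1, hsign, hmu, hS]
  linear_combination (((-1:ℂ) * (q^2)⁻¹) ^ (∑ i ∈ range n, (k - m i) * m i)
    * (∏ i ∈ range n, (if m (cyc n i) < m i then (-1:ℂ) * μ else 1))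
    * ((-1:ℂ) ^ (∑ i ∈ range n, (k - m (cyc n i)) * m i))
    * (∏ i ∈ range n, s i ^ m i)
    * (∏ i ∈ range n, (if m i < m (cyc n i) then SPa s i else 1))) * hPQ

lemma key_identity (n k : ℕ) (q μ : ℂ) (s : ℕ → ℂ) (v : Va) (m : ℕ → ℕ) (hn : 0 < n)
    (hm : ∀ i, i < n → m i ≤ k)
    (hstep : ∀ i, i < n → m (cyc n i) ≤ m i + 1 ∧ m i ≤ m (cyc n i) + 1)
    (hs : ∀ i, i < n → s i ≠ 0) (hprod : ∏ i ∈ range n, s i = 1) :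
    NFgen n k q μ s v m topT 0 * DFgen n k v m lowT 0
      = (∏ i ∈ range n, s i ^ m i) * (NFgen n k q μ s v m lowT 0 * DFgen n k v m topT 0) := by
  rw [NF_top_val n k q μ s v m hn hm, NF_low_val n k q μ s v m hn hm,
    DF_top_val n k v m hn hm, DF_low_val n k v m hn hm]
  have hmix := mix_identity n k q μ s v m hn hm hstep hs hprod
  linear_combination (CNa n k q μ s v m * CDa n k v m) * hmix

end AuxMaster
theorem stmt1 (n : ℕ) (hn : 3 ≤ n) (q d : ℂ) (hq : q ≠ 0) (hd : d ≠ 0)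
    (hroot : NoRootsOfUnity q d) (s : ℕ → ℂ) (hs : ∀ i, i < n → s i ≠ 0)
    (hprod : ∏ i ∈ Finset.range n, s i = 1) (k : ℕ) (hk : 1 ≤ k) (μ : ℂ) :
    memA n q d s (fun _ => k) (Fkmu n q s k μ) := by
  have hn0 : 0 < n := by omega
  refine ⟨⟨⟨Fkmu_dependsOn n q s k μ hn0, Fkmu_symmIn n q s k μ hn,
    Fkmu_pole n q s k μ hn, Fkmu_wheel n q s k μ hn hq (fun m hm => (hroot m hm).1) d hd⟩,
    Fkmu_deg0 n q s k μ hn0⟩, ?_⟩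
  intro a b hab hcount v hv
  set m : ℕ → ℕ := intvCount n a b with hmdef
  have hm : ∀ i, i < n → m i ≤ k := fun i hi => hcount i hi
  have hstep : ∀ i, i < n → m (cyc n i) ≤ m i + 1 ∧ m i ≤ m (cyc n i) + 1 := by
    intro i hi
    have h := intv_step n (by omega) a b hab i hi
    exact ⟨h.1, h.2⟩
  obtain ⟨hexp0, hexpI⟩ := exp_identities n k m hm hstep
  have hDT := DFgen_top_ne n k v m (by omega) hv
  have hDL := DFgen_low_ne n k v m (by omega) hv
  have hfun : (fun ξ : ℂ => Fkmu n q s k μ (scaleVar n m ξ v))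
      = fun ξ : ℂ => NFgen n k q μ s v m idT ξ / DFgen n k v m idT ξ :=
    funext (Fkmu_scaleVar_eq n k q μ s v m hn0 hm)
  refine ⟨NFgen n k q μ s v m topT 0 / DFgen n k v m topT 0,
    NFgen n k q μ s v m lowT 0 / DFgen n k v m lowT 0, ?_, ?_, ?_⟩
  · unfold limInfty
    rw [hfun]
    exact tendsto_ratio_infty n k q μ s v m hexpI hDT
  · unfold limZero
    rw [hfun]
    exact tendsto_ratio_zero n k q μ s v m hexp0 hDL
  · rw [prod_sext n hn0 s a b, ← hmdef]
    have hkey := key_identity n k q μ s v m hn0 hm hstep hs hprod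
    field_simp
    linear_combination hkey
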